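/- arXiv:1902.05890 — 5 statements merged into one kernel-verified Lean document; each statement's English description precedes it below -/
import Mathlib

section
/- Let n ≥ 0 and assume that every boldface Π¹_{n+1} subset of Baire space ℕ^ω is determined. If R ⊆ 2^ω × 2^ω is a boldface Σ¹_{n+2} set which is the graph of a well-ordering of its field X ⊆ 2^ω, then X is countable. In particular, there is no boldface Σ¹_{n+2} relation well-ordering a set of reals in order type ω₁. -/
namespace GaleStewart

/-- Baire space `ℕ^ω`. -/
abbrev Baire : Type := ℕ → ℕ

/-- Cantor space `2^ω`. -/
abbrev Cantor : Type := ℕ → Bool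

/-- A strategy: given the finite sequence of moves made so far, produce the next move. -/
abbrev Strategy : Type := List ℕ → ℕ

/-- The infinite play `x` is consistent with `σ` viewed as a strategy for player I,
who plays the moves `x (2*k)` on the basis of the position of length `2*k`. -/
def PlayIsI (σ : Strategy) (x : Baire) : Prop :=
  ∀ k : ℕ, x (2 * k) = σ (List.ofFn fun i : Fin (2 * k) => x i.val)

/-- The infinite play `x` is consistent with `τ` viewed as a strategy for player II,
who plays the moves `x (2*k+1)` on the basis of the position of length `2*k+1`. -/
def PlayIsII (τ : Strategy) (x : Baire) : Prop :=
  ∀ k : ℕ, x (2 * k + 1) = τ (List.ofFn fun i : Fin (2 * k + 1) => x i.val)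

/-- The Gale–Stewart game with payoff set `A ⊆ ℕ^ω` is determined: player I has a
winning strategy (every play following it lies in `A`), or player II has a winning
strategy (every play following it lies outside `A`). -/
def Determined (A : Set Baire) : Prop :=
  (∃ σ : Strategy, ∀ x : Baire, PlayIsI σ x → x ∈ A) ∨
    (∃ τ : Strategy, ∀ x : Baire, PlayIsII τ x → x ∉ A)

/-- Boldface `Π¹ₙ` subsets of a topological space, where `Π¹₀` means closed, and a set
is `Π¹ₙ₊₁` iff its complement is the projection along a Baire-space coordinate of a
`Π¹ₙ` set.  (So `Σ¹₁` = projections of closed sets, `Π¹ₙ` = complements of `Σ¹ₙ`,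
`Σ¹ₙ₊₁` = projections of `Π¹ₙ` sets.) -/
def boldfacePiAux : ℕ → (X : Type) → TopologicalSpace X → Set X → Prop
  | 0, _X, tX, A => letI := tX; IsClosed A
  | n + 1, X, tX, A =>
      letI := tX
      ∃ B : Set (X × Baire),
        boldfacePiAux n (X × Baire) inferInstance B ∧
          Aᶜ = {x | ∃ y : Baire, (x, y) ∈ B}

/-- The boldface pointclass `Π¹ₙ`. -/
def BoldfacePi (n : ℕ) (X : Type) [tX : TopologicalSpace X] (A : Set X) : Prop :=
  boldfacePiAux n X tX A

/-- The boldface pointclass `Σ¹ₙ` (meaningful for `n ≥ 1`): projections along a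
Baire-space coordinate of `Π¹ₙ₋₁` sets. -/
def BoldfaceSigma (n : ℕ) (X : Type) [tX : TopologicalSpace X] (A : Set X) : Prop :=
  ∃ B : Set (X × Baire),
    boldfacePiAux (n - 1) (X × Baire) inferInstance B ∧
      A = {x | ∃ y : Baire, (x, y) ∈ B}

/-- The field of a relation `R ⊆ 2^ω × 2^ω`. -/
def fieldOf (R : Set (Cantor × Cantor)) : Set Cantor :=
  {y | ∃ x, (x, y) ∈ R ∨ (y, x) ∈ R}

/-- `R ⊆ 2^ω × 2^ω` is the graph of a well-ordering of its field: on the field,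
`R` is reflexive, antisymmetric, transitive, total, and every nonempty subset of
the field has an `R`-least element. -/
def IsWellOrderingGraph (R : Set (Cantor × Cantor)) : Prop :=
  (∀ x ∈ fieldOf R, (x, x) ∈ R) ∧
  (∀ x y, (x, y) ∈ R → (y, x) ∈ R → x = y) ∧
  (∀ x y z, (x, y) ∈ R → (y, z) ∈ R → (x, z) ∈ R) ∧
  (∀ x ∈ fieldOf R, ∀ y ∈ fieldOf R, (x, y) ∈ R ∨ (y, x) ∈ R) ∧
  (∀ S : Set Cantor, S ⊆ fieldOf R → S.Nonempty → ∃ m ∈ S, ∀ y ∈ S, (m, y) ∈ R)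

open Set

/-! ### Prefix utilities -/

def upto {α : Type} (x : ℕ → α) (m : ℕ) : List α := List.ofFn fun i : Fin m => x i.val

@[simp] lemma upto_length {α : Type} (x : ℕ → α) (m : ℕ) : (upto x m).length = m := by
  simp [upto]

@[simp] lemma upto_zero {α : Type} (x : ℕ → α) : upto x 0 = [] := by simp [upto]

lemma upto_succ {α : Type} (x : ℕ → α) (m : ℕ) :
    upto x (m + 1) = upto x m ++ [x m] := by
  simp only [upto, List.ofFn_succ']
  simp [List.concat_eq_append]

lemma upto_getElem {α : Type} (x : ℕ → α) (m i : ℕ) (h : i < (upto x m).length) :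
    (upto x m)[i] = x i := by
  simp [upto]

def Pref {α : Type} (u : List α) (x : ℕ → α) : Prop :=
  ∀ i (h : i < u.length), x i = u[i]

lemma pref_nil {α : Type} (x : ℕ → α) : Pref [] x := by intro i h; simp at h

lemma pref_upto {α : Type} (x : ℕ → α) (m : ℕ) : Pref (upto x m) x := by
  intro i h
  rw [upto_getElem]

lemma Pref.mono {α : Type} {u v : List α} {x : ℕ → α} (huv : u <+: v) (h : Pref v x) :
    Pref u x := by
  intro i hi
  obtain ⟨t, rfl⟩ := huv
  rw [h i (by simp; omega), List.getElem_append_left]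

lemma pref_eq_upto {α : Type} {u : List α} {x : ℕ → α} (h : Pref u x) :
    u = upto x u.length := by
  apply List.ext_getElem (by simp)
  intro i h1 h2
  rw [upto_getElem, ← h i h1]

lemma upto_prefix {α : Type} (x : ℕ → α) {m k : ℕ} (h : m ≤ k) :
    upto x m <+: upto x k := by
  induction k with
  | zero => simp_all
  | succ k ih =>
    rcases Nat.lt_or_ge m (k+1) with h' | h'
    · exact (ih (by omega)).trans (by rw [upto_succ]; exact ⟨[x k], rfl⟩)
    · have : m = k + 1 := by omega
      subst this; exact List.prefix_refl _

lemma pref_comparable {α : Type} {u v : List α} {x : ℕ → α} (hu : Pref u x) (hv : Pref v x) :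
    u <+: v ∨ v <+: u := by
  rcases Nat.lt_or_ge v.length u.length with h | h
  · right; rw [pref_eq_upto hu, pref_eq_upto hv]; exact upto_prefix x (by omega)
  · left; rw [pref_eq_upto hu, pref_eq_upto hv]; exact upto_prefix x h

lemma pref_agree {α : Type} {u : List α} {x y : ℕ → α} (hx : Pref u x) (hy : Pref u y)
    {i : ℕ} (h : i < u.length) : x i = y i := by
  rw [hx i h, hy i h]

/-! ### Cylinders in Cantor space -/

def cyl (u : List Bool) : Set Cantor := {x | Pref u x}

lemma isClopen_cyl (u : List Bool) : IsClopen (cyl u) := by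
  have : cyl u = ⋂ i : Fin u.length, {x : Cantor | x i.val = u[i.val]} := by
    ext x; simp only [cyl, Pref, mem_iInter, mem_setOf_eq]
    exact ⟨fun h i => h i.val i.isLt, fun h i hi => h ⟨i, hi⟩⟩
  rw [this]
  apply isClopen_iInter_of_finite
  intro i
  exact (isClopen_discrete {u[i.val]}).preimage (continuous_apply i.val)

def extendDef (u : List Bool) : Cantor := fun i => u.getD i false

lemma pref_extendDef (u : List Bool) : Pref u (extendDef u) := by
  intro i h
  simp [extendDef, List.getD_eq_getElem?_getD, List.getElem?_eq_getElem h]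

lemma cyl_nonempty (u : List Bool) : (cyl u).Nonempty := ⟨extendDef u, pref_extendDef u⟩

lemma cyl_mono {u v : List Bool} (h : u <+: v) : cyl v ⊆ cyl u := fun _ hx => Pref.mono h hx

lemma open_contains_cyl {U : Set Cantor} (hU : IsOpen U) {x : Cantor} (hx : x ∈ U) :
    ∃ m, x ∈ cyl (upto x m) ∧ cyl (upto x m) ⊆ U := by
  rw [isOpen_pi_iff] at hU
  obtain ⟨I, u, hI, hsub⟩ := hU x hx
  refine ⟨(I.sup id) + 1, pref_upto x _, fun y hy => hsub ?_⟩
  intro a ha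
  have hlt : a < I.sup id + 1 := by
    have := Finset.le_sup (f := id) ha; simp only [id] at this; omega
  have := pref_agree (pref_upto x (I.sup id + 1)) hy (i := a) (by simpa using hlt)
  rw [← this]
  exact (hI a ha).2

lemma incomp_disjoint {u v : List Bool} (h1 : ¬ u <+: v) (h2 : ¬ v <+: u) :
    cyl u ∩ cyl v = ∅ := by
  ext x
  simp only [mem_inter_iff, mem_empty_iff_false, iff_false]
  rintro ⟨hu, hv⟩
  rcases pref_comparable hu hv with h | h
  · exact h1 h
  · exact h2 h

/-! ### Meagerness utilities -/

lemma nwd_of_extend {S : Set Cantor}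
    (h : ∀ u : List Bool, ∃ v, u <+: v ∧ cyl v ∩ S = ∅) : IsNowhereDense S := by
  rw [IsNowhereDense, eq_empty_iff_forall_notMem]
  intro x hx
  obtain ⟨m, hxm, hsub⟩ := open_contains_cyl isOpen_interior hx
  obtain ⟨v, hpre, hdisj⟩ := h (upto x m)
  obtain ⟨y, hy⟩ := cyl_nonempty v
  have hyc : y ∈ closure S := interior_subset (hsub (cyl_mono hpre hy))
  rw [mem_closure_iff] at hyc
  obtain ⟨z, hz1, hz2⟩ := hyc (cyl v) (isClopen_cyl v).2 hy
  rw [eq_empty_iff_forall_notMem] at hdisj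
  exact hdisj z ⟨hz1, hz2⟩

lemma IsNowhereDense.isMeagre' {X : Type*} [TopologicalSpace X] {s : Set X}
    (h : IsNowhereDense s) : IsMeagre s := by
  rw [isMeagre_iff_countable_union_isNowhereDense]
  exact ⟨{s}, by simpa using h, countable_singleton s, by simp⟩

lemma meager_of_countable_union_nwd {X : Type*} [TopologicalSpace X] {ι : Type*} [Countable ι]
    (S : ι → Set X) (h : ∀ i, IsNowhereDense (S i)) : IsMeagre (⋃ i, S i) := by
  rw [isMeagre_iff_countable_union_isNowhereDense]
  refine ⟨range S, by simpa using fun i => h i, countable_range S, by simp [sUnion_range]⟩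

lemma not_isMeagre_of_isOpen {X : Type*} [TopologicalSpace X] [BaireSpace X] {U : Set X}
    (hU : IsOpen U) (hne : U.Nonempty) : ¬ IsMeagre U := by
  intro h
  have hd : Dense Uᶜ := dense_of_mem_residual h
  obtain ⟨x, hx1, hx2⟩ := hd.inter_open_nonempty U hU hne
  exact hx2 hx1

lemma singleton_meager (a : Cantor) : IsMeagre ({a} : Set Cantor) := by
  apply IsNowhereDense.isMeagre'
  apply nwd_of_extend
  intro u
  refine ⟨u ++ [!(a u.length)], ⟨_, rfl⟩, ?_⟩
  ext x
  simp only [mem_inter_iff, mem_empty_iff_false, iff_false, mem_singleton_iff]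
  rintro ⟨hx, rfl⟩
  have := hx u.length (by simp)
  rw [List.getElem_append_right (by simp)] at this
  simp at this

/-! ### Pointclass closure lemmas -/

def proj {X : Type} (B : Set (X × Baire)) : Set X := {x | ∃ y : Baire, (x, y) ∈ B}

lemma boldfacePi_succ_iff {n : ℕ} {X : Type} [tX : TopologicalSpace X] {A : Set X} :
    BoldfacePi (n + 1) X A ↔
      ∃ B : Set (X × Baire), BoldfacePi n (X × Baire) B ∧ Aᶜ = proj B := Iff.rfl

lemma boldfaceSigma_iff {n : ℕ} {X : Type} [tX : TopologicalSpace X] {A : Set X} :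
    BoldfaceSigma (n + 2) X A ↔
      ∃ B : Set (X × Baire), BoldfacePi (n + 1) (X × Baire) B ∧ A = proj B := Iff.rfl

lemma piPreimage : ∀ (n : ℕ) {X Y : Type} [tX : TopologicalSpace X] [tY : TopologicalSpace Y]
    {f : X → Y}, Continuous f → ∀ {B : Set Y}, BoldfacePi n Y B → BoldfacePi n X (f ⁻¹' B)
  | 0, X, Y, tX, tY, f, hf, B, hB => hB.preimage hf
  | (n+1), X, Y, tX, tY, f, hf, B, hB => by
    obtain ⟨C, hC, hproj⟩ := hB
    refine ⟨(fun p : X × Baire => (f p.1, p.2)) ⁻¹' C,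
      piPreimage n (hf.comp continuous_fst |>.prodMk continuous_snd) hC, ?_⟩
    ext x
    simp only [mem_compl_iff, mem_preimage, mem_setOf_eq]
    constructor
    · intro hx
      have : f x ∈ Bᶜ := hx
      rw [hproj] at this
      exact this
    · intro ⟨y, hy⟩
      intro hfx
      have : f x ∈ Bᶜ := by rw [hproj]; exact ⟨y, hy⟩
      exact this hfx

lemma patch_compl {X : Type} (A B U : Set X) :
    ((A ∩ U) ∪ (B \ U))ᶜ = (Aᶜ ∩ U) ∪ (Bᶜ \ U) := by
  ext x; by_cases hx : x ∈ U <;> simp [hx]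

lemma proj_patch {X : Type} (P Q : Set (X × Baire)) (U : Set X) :
    proj ((P ∩ ((fun p : X × Baire => p.1) ⁻¹' U)) ∪ (Q \ ((fun p : X × Baire => p.1) ⁻¹' U)))
      = (proj P ∩ U) ∪ (proj Q \ U) := by
  ext x
  by_cases hx : x ∈ U <;> simp [proj, hx]

lemma piPatch : ∀ (n : ℕ) {X : Type} [tX : TopologicalSpace X] {U A B : Set X},
    IsClopen U → BoldfacePi n X A → BoldfacePi n X B → BoldfacePi n X ((A ∩ U) ∪ (B \ U))
  | 0, X, tX, U, A, B, hU, hA, hB => by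
    rw [Set.diff_eq]
    exact (hA.inter hU.1).union (hB.inter hU.compl.1)
  | (n+1), X, tX, U, A, B, hU, hA, hB => by
    obtain ⟨P, hP, hPe⟩ := hA
    obtain ⟨Q, hQ, hQe⟩ := hB
    have hUc : IsClopen ((fun p : X × Baire => p.1) ⁻¹' U) := hU.preimage continuous_fst
    refine ⟨(P ∩ ((fun p : X × Baire => p.1) ⁻¹' U)) ∪ (Q \ ((fun p : X × Baire => p.1) ⁻¹' U)),
      piPatch n hUc hP hQ, ?_⟩
    have h1 : Aᶜ = proj P := hPe
    have h2 : Bᶜ = proj Q := hQe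
    show ((A ∩ U) ∪ (B \ U))ᶜ = proj _
    rw [patch_compl, h1, h2, proj_patch]

/-- cons for Baire sequences -/
def bcons (a : ℕ) (w : Baire) : Baire := fun k => match k with
  | 0 => a
  | k + 1 => w k

def btail (w : Baire) : Baire := fun k => w (k + 1)

lemma continuous_btail_snd {X : Type} [TopologicalSpace X] :
    Continuous (fun p : X × Baire => (p.1, btail p.2)) := by
  refine continuous_fst.prodMk (continuous_pi fun k => ?_)
  exact (continuous_apply (k+1)).comp continuous_snd

lemma piProjUnion {n : ℕ} {X : Type} [tX : TopologicalSpace X] {P Q : Set (X × Baire)}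
    (hP : BoldfacePi n (X × Baire) P) (hQ : BoldfacePi n (X × Baire) Q) :
    ∃ T : Set (X × Baire), BoldfacePi n (X × Baire) T ∧ proj T = proj P ∪ proj Q := by
  classical
  set g : X × Baire → X × Baire := fun p => (p.1, btail p.2) with hg
  have hgc : Continuous g := continuous_btail_snd
  have hU : IsClopen {p : X × Baire | p.2 0 = 0} := by
    have : Continuous (fun p : X × Baire => p.2 0) := (continuous_apply 0).comp continuous_snd
    exact (isClopen_discrete ({0} : Set ℕ)).preimage this
  refine ⟨(g ⁻¹' P ∩ {p | p.2 0 = 0}) ∪ ((g ⁻¹' Q) \ {p | p.2 0 = 0}),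
    piPatch n hU (piPreimage n hgc hP) (piPreimage n hgc hQ), ?_⟩
  ext x
  simp only [proj, mem_union, mem_setOf_eq, mem_inter_iff, mem_preimage, mem_diff]
  constructor
  · rintro ⟨y, ⟨hy, h0⟩ | ⟨hy, h0⟩⟩
    · exact Or.inl ⟨btail y, hy⟩
    · exact Or.inr ⟨btail y, hy⟩
  · rintro (⟨y, hy⟩ | ⟨y, hy⟩)
    · refine ⟨bcons 0 y, Or.inl ⟨?_, rfl⟩⟩
      have : btail (bcons 0 y) = y := by funext k; rfl
      simpa [g, this] using hy
    · refine ⟨bcons 1 y, Or.inr ⟨?_, by simp [bcons]⟩⟩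
      have : btail (bcons 1 y) = y := by funext k; rfl
      simpa [g, this] using hy

lemma piInterSucc {n : ℕ} {X : Type} [tX : TopologicalSpace X] {A B : Set X}
    (hA : BoldfacePi (n + 1) X A) (hB : BoldfacePi (n + 1) X B) :
    BoldfacePi (n + 1) X (A ∩ B) := by
  obtain ⟨P, hP, hPe⟩ := hA
  obtain ⟨Q, hQ, hQe⟩ := hB
  obtain ⟨T, hT, hTe⟩ := piProjUnion hP hQ
  refine ⟨T, hT, ?_⟩
  rw [compl_inter]
  have h1 : Aᶜ = proj P := hPe
  have h2 : Bᶜ = proj Q := hQe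
  rw [h1, h2]
  exact hTe.symm

/-- interleaving of two Baire sequences -/
def binter (u v : Baire) : Baire := fun k => if k % 2 = 0 then u (k / 2) else v (k / 2)

def bev (w : Baire) : Baire := fun k => w (2 * k)
def bod (w : Baire) : Baire := fun k => w (2 * k + 1)

@[simp] lemma bev_binter (u v : Baire) : bev (binter u v) = u := by
  funext k; simp [bev, binter, Nat.mul_div_cancel_left]
@[simp] lemma bod_binter (u v : Baire) : bod (binter u v) = v := by
  funext k
  simp only [bod, binter]
  rw [if_neg (by omega)]
  congr 1
  omega

lemma continuous_bev_snd {X : Type} [TopologicalSpace X] :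
    Continuous (fun p : X × Baire => (p.1, bev p.2)) :=
  continuous_fst.prodMk (continuous_pi fun k => (continuous_apply (2*k)).comp continuous_snd)

lemma continuous_bod_snd {X : Type} [TopologicalSpace X] :
    Continuous (fun p : X × Baire => (p.1, bod p.2)) :=
  continuous_fst.prodMk (continuous_pi fun k => (continuous_apply (2*k+1)).comp continuous_snd)

lemma sigmaInter {n : ℕ} {X : Type} [tX : TopologicalSpace X] {A B : Set X}
    (hA : BoldfaceSigma (n + 2) X A) (hB : BoldfaceSigma (n + 2) X B) :
    BoldfaceSigma (n + 2) X (A ∩ B) := by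
  obtain ⟨P, hP, hPe⟩ := hA
  obtain ⟨Q, hQ, hQe⟩ := hB
  rw [boldfaceSigma_iff]
  refine ⟨(fun p : X × Baire => (p.1, bev p.2)) ⁻¹' P ∩ (fun p : X × Baire => (p.1, bod p.2)) ⁻¹' Q,
    piInterSucc (piPreimage _ continuous_bev_snd hP) (piPreimage _ continuous_bod_snd hQ), ?_⟩
  ext x
  simp only [mem_inter_iff, proj, mem_setOf_eq, mem_preimage]
  constructor
  · rintro ⟨hxA, hxB⟩
    have h1 : x ∈ {x | ∃ y, (x, y) ∈ P} := by rw [← hPe]; exact hxA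
    have h2 : x ∈ {x | ∃ y, (x, y) ∈ Q} := by rw [← hQe]; exact hxB
    obtain ⟨u, hu⟩ := h1
    obtain ⟨v, hv⟩ := h2
    exact ⟨binter u v, by simpa using hu, by simpa using hv⟩
  · rintro ⟨y, hy1, hy2⟩
    constructor
    · rw [hPe]; exact ⟨bev y, hy1⟩
    · rw [hQe]; exact ⟨bod y, hy2⟩

lemma sigmaPreimage {n : ℕ} {X Y : Type} [tX : TopologicalSpace X] [tY : TopologicalSpace Y]
    {f : X → Y} (hf : Continuous f) {B : Set Y} (hB : BoldfaceSigma (n + 2) Y B) :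
    BoldfaceSigma (n + 2) X (f ⁻¹' B) := by
  obtain ⟨P, hP, hPe⟩ := hB
  rw [boldfaceSigma_iff]
  refine ⟨(fun p : X × Baire => (f p.1, p.2)) ⁻¹' P,
    piPreimage _ (hf.comp continuous_fst |>.prodMk continuous_snd) hP, ?_⟩
  ext x
  simp only [mem_preimage, proj, mem_setOf_eq]
  rw [hPe]
  rfl

/-! ### Generic play construction -/

def hist (F : List ℕ → ℕ) : ℕ → List ℕ
  | 0 => []
  | k + 1 => hist F k ++ [F (hist F k)]

def genPlay (F : List ℕ → ℕ) : Baire := fun k => F (hist F k)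

@[simp] lemma hist_length (F : List ℕ → ℕ) (k : ℕ) : (hist F k).length = k := by
  induction k with
  | zero => rfl
  | succ k ih => simp [hist, ih]

lemma upto_genPlay (F : List ℕ → ℕ) (k : ℕ) : upto (genPlay F) k = hist F k := by
  induction k with
  | zero => simp [hist]
  | succ k ih => rw [upto_succ, ih, hist]; rfl

lemma playIsI_genPlay {σ : Strategy} {F : List ℕ → ℕ}
    (h : ∀ p : List ℕ, Even p.length → F p = σ p) : PlayIsI σ (genPlay F) := by
  intro k
  have : (List.ofFn fun i : Fin (2 * k) => genPlay F i.val) = hist F (2 * k) :=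
    upto_genPlay F (2 * k)
  rw [this]
  exact h (hist F (2 * k)) (by rw [hist_length]; exact even_two_mul k)

lemma playIsII_genPlay {τ : Strategy} {F : List ℕ → ℕ}
    (h : ∀ p : List ℕ, ¬ Even p.length → F p = τ p) : PlayIsII τ (genPlay F) := by
  intro k
  have : (List.ofFn fun i : Fin (2 * k + 1) => genPlay F i.val) = hist F (2 * k + 1) :=
    upto_genPlay F (2 * k + 1)
  rw [this]
  exact h (hist F (2 * k + 1)) (by simp [Nat.even_add_one, parity_simps])

/-! ### Continuity of locally determined maps -/

lemma continuous_locally_determined {α β : Type} [TopologicalSpace α] [DiscreteTopology α]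
    [TopologicalSpace β] [DiscreteTopology β]
    (g : (ℕ → α) → ℕ → β) (h : ∀ i, ∃ m, ∀ z z', upto z m = upto z' m → g z i = g z' i) :
    Continuous g := by
  refine continuous_pi fun i => ?_
  obtain ⟨m, hm⟩ := h i
  rw [continuous_discrete_rng]
  intro b
  rw [isOpen_iff_mem_nhds]
  intro z hz
  have hopen : IsOpen {z' : ℕ → α | upto z' m = upto z m} := by
    have : {z' : ℕ → α | upto z' m = upto z m} = ⋂ j : Fin m, {z' | z' j.val = z j.val} := by
      ext z'
      simp only [mem_setOf_eq, mem_iInter]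
      constructor
      · intro he j
        have h1 := pref_upto z' m
        have h2 : Pref (upto z' m) z := by rw [he]; exact pref_upto z m
        exact pref_agree h1 h2 (u := upto z' m) (by simpa using j.isLt)
      · intro hj
        apply List.ext_getElem (by simp)
        intro i h1 h2
        rw [upto_getElem, upto_getElem]
        exact hj ⟨i, by simpa using h1⟩
    rw [this]
    refine isOpen_iInter_of_finite fun j => ?_
    have : {z' : ℕ → α | z' j.val = z j.val} = (fun z' : ℕ → α => z' j.val) ⁻¹' {z j.val} := rfl
    rw [this]
    exact (isOpen_discrete _).preimage (continuous_apply j.val)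
  have : {z' : ℕ → α | upto z' m = upto z m} ⊆ (fun z => g z i) ⁻¹' {b} := by
    intro z' hz'
    simp only [mem_preimage, mem_singleton_iff]
    rw [hm z' z hz']
    exact hz
  exact Filter.mem_of_superset (hopen.mem_nhds rfl) this

/-! ### Move decoding for the Banach–Mazur game -/

def dchunk (m : ℕ) : List Bool :=
  match Encodable.decode (α := List Bool) m with
  | some l => if l = [] then [false] else l
  | none => [false]

lemma dchunk_ne_nil (m : ℕ) : dchunk m ≠ [] := by
  unfold dchunk
  rcases Encodable.decode (α := List Bool) m with _ | l
  · simp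
  · dsimp only
    split <;> simp_all

lemma dchunk_encode {l : List Bool} (h : l ≠ []) : dchunk (Encodable.encode l) = l := by
  unfold dchunk
  rw [Encodable.encodek]
  simp [h]

def dIBM (m : ℕ) : List Bool × ℕ :=
  match Encodable.decode (α := List Bool × ℕ) m with
  | some (l, c) => if l = [] then ([false], c) else (l, c)
  | none => ([false], 0)

lemma dIBM_ne_nil (m : ℕ) : (dIBM m).1 ≠ [] := by
  unfold dIBM
  rcases Encodable.decode (α := List Bool × ℕ) m with _ | ⟨l, c⟩
  · simp
  · dsimp only
    split <;> simp_all

lemma dIBM_encode {l : List Bool} (c : ℕ) (h : l ≠ []) :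
    dIBM (Encodable.encode (l, c)) = (l, c) := by
  unfold dIBM
  rw [Encodable.encodek]
  simp [h]

def bmChunk (k m : ℕ) : List Bool := if k % 2 = 0 then (dIBM m).1 else dchunk m

lemma bmChunk_ne_nil (k m : ℕ) : bmChunk k m ≠ [] := by
  unfold bmChunk; split
  · exact dIBM_ne_nil m
  · exact dchunk_ne_nil m

/-- a code guaranteed to realize chunk `t` at move-index `k` (with witness value `c` if
it is a move of player I). -/
def bmCode (k : ℕ) (t : List Bool) (c : ℕ) : ℕ :=
  if k % 2 = 0 then Encodable.encode ((t, c) : List Bool × ℕ) else Encodable.encode t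

lemma bmChunk_bmCode {t : List Bool} (h : t ≠ []) (k c : ℕ) :
    bmChunk k (bmCode k t c) = t := by
  by_cases hk : k % 2 = 0
  · rw [bmChunk, if_pos hk, bmCode, if_pos hk, dIBM_encode _ h]
  · rw [bmChunk, if_neg hk, bmCode, if_neg hk, dchunk_encode h]

def bmConAux : ℕ → List ℕ → List Bool
  | _, [] => []
  | k, m :: p => bmChunk k m ++ bmConAux (k + 1) p

def bmCon (p : List ℕ) : List Bool := bmConAux 0 p

lemma bmConAux_append (k : ℕ) (p q : List ℕ) :
    bmConAux k (p ++ q) = bmConAux k p ++ bmConAux (k + p.length) q := by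
  induction p generalizing k with
  | nil => simp [bmConAux]
  | cons m p ih =>
    simp only [List.cons_append, bmConAux, ih (k + 1), List.append_assoc, List.length_cons]
    rw [show k + (p.length + 1) = k + 1 + p.length from by omega]

lemma bmCon_append (p q : List ℕ) :
    bmCon (p ++ q) = bmCon p ++ bmConAux p.length q := by
  rw [bmCon, bmCon, bmConAux_append, Nat.zero_add]

lemma bmConAux_length (k : ℕ) (p : List ℕ) : p.length ≤ (bmConAux k p).length := by
  induction p generalizing k with
  | nil => simp [bmConAux]
  | cons m p ih =>
    simp only [bmConAux, List.length_append, List.length_cons]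
    have h1 : 1 ≤ (bmChunk k m).length := by
      rcases List.exists_cons_of_ne_nil (bmChunk_ne_nil k m) with ⟨a, t, he⟩
      simp [he]
    have := ih (k + 1)
    omega

lemma bmCon_length (p : List ℕ) : p.length ≤ (bmCon p).length := bmConAux_length 0 p

lemma prefix_getElem {α : Type} {u v : List α} (h : u <+: v) {i : ℕ} (hi : i < u.length) :
    v[i]'(lt_of_lt_of_le hi h.length_le) = u[i] := by
  obtain ⟨t, rfl⟩ := h
  rw [List.getElem_append_left]

lemma bmCon_mono {z : Baire} {a b : ℕ} (h : a ≤ b) : bmCon (upto z a) <+: bmCon (upto z b) := by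
  obtain ⟨t, ht⟩ := upto_prefix z h
  rw [← ht, bmCon_append]
  exact ⟨_, rfl⟩

def bmX (z : Baire) : Cantor := fun i => (bmCon (upto z (i + 1))).getD i false

def bmW (z : Baire) : Baire := fun k => (dIBM (z (2 * k))).2

lemma bmX_pref (z : Baire) (m : ℕ) : Pref (bmCon (upto z m)) (bmX z) := by
  intro i hi
  have hlen : i < (bmCon (upto z (i + 1))).length := by
    have h1 := bmCon_length (upto z (i + 1))
    rw [upto_length] at h1
    omega
  rw [bmX, List.getD_eq_getElem _ _ hlen]
  rcases le_or_gt (i + 1) m with h | h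
  · exact (prefix_getElem (bmCon_mono h) hlen).symm
  · exact prefix_getElem (bmCon_mono (by omega : m ≤ i + 1)) hi

lemma eq_of_pref_all {α : Type} {x y : ℕ → α}
    (h : ∀ m : ℕ, ∃ L : List α, Pref L x ∧ Pref L y ∧ m ≤ L.length) : x = y := by
  funext i
  obtain ⟨L, h1, h2, h3⟩ := h (i + 1)
  exact pref_agree h1 h2 (by omega)

lemma continuous_bmX : Continuous bmX := by
  apply continuous_locally_determined
  intro i
  exact ⟨i + 1, fun z z' he => by simp only [bmX]; rw [he]⟩

lemma continuous_bmW : Continuous bmW := by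
  apply continuous_locally_determined (α := ℕ) (β := ℕ)
  intro k
  refine ⟨2 * k + 1, fun z z' he => ?_⟩
  simp only [bmW]
  have : z (2 * k) = z' (2 * k) := by
    have h1 := pref_upto z (2 * k + 1)
    have h2 : Pref (upto z (2 * k + 1)) z' := by rw [he]; exact pref_upto z' (2 * k + 1)
    exact pref_agree h1 h2 (by simp)
  rw [this]

/-! ### The Banach–Mazur dichotomy -/

def SI (σ : Strategy) (p : List ℕ) : Set Cantor :=
  {x | Pref (bmCon (p ++ [σ p])) x ∧
       ∀ m : ℕ, ¬ Pref (bmCon ((p ++ [σ p] ++ [m]) ++ [σ (p ++ [σ p] ++ [m])])) x}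

def SII (τ : Strategy) (p : List ℕ) (c : ℕ) : Set Cantor :=
  {x | Pref (bmCon p) x ∧
       ∀ t : List Bool, t ≠ [] →
         ¬ Pref (bmCon ((p ++ [bmCode p.length t c]) ++ [τ (p ++ [bmCode p.length t c])])) x}

/-- Generic nowhere-density argument: a set of the form
`{x | Pref c x ∧ ∀ legal continuation, continuation fails}` where every extension of `c`
can be realized by a continuation, is nowhere dense. -/
lemma nwd_of_blocked {S : Set Cantor} (c : List Bool)
    (hsub : ∀ x ∈ S, Pref c x)
    (hblock : ∀ t : List Bool, t ≠ [] → ∃ v : List Bool, c ++ t <+: v ∧ cyl v ∩ S = ∅) :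
    IsNowhereDense S := by
  apply nwd_of_extend
  intro u
  by_cases hcomp : c <+: u ∨ u <+: c
  · have hcw : c <+: (if c <+: u then u else c) := by
      by_cases h : c <+: u <;> simp [h]
    have huw : u <+: (if c <+: u then u else c) := by
      by_cases h : c <+: u
      · simp [h]
      · simpa [h] using hcomp.resolve_left h
    set w := if c <+: u then u else c with hw
    obtain ⟨v, hv1, hv2⟩ := hblock (w.drop c.length ++ [false]) (by simp)
    have hct : c ++ (w.drop c.length ++ [false]) = w ++ [false] := by
      rw [← List.append_assoc, List.prefix_iff_eq_append.mp hcw]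
    refine ⟨v, ?_, hv2⟩
    calc u <+: w := huw
      _ <+: w ++ [false] := List.prefix_append _ _
      _ = c ++ (w.drop c.length ++ [false]) := hct.symm
      _ <+: v := hv1
  · push_neg at hcomp
    refine ⟨u, List.prefix_refl u, ?_⟩
    rw [eq_empty_iff_forall_notMem]
    rintro x ⟨hxu, hxS⟩
    rcases pref_comparable (hsub x hxS) hxu with h | h
    · exact hcomp.1 h
    · exact hcomp.2 h

lemma SI_nwd (σ : Strategy) (p : List ℕ) : IsNowhereDense (SI σ p) := by
  apply nwd_of_blocked (bmCon (p ++ [σ p])) (fun x hx => hx.1)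
  intro t htne
  set m := bmCode (p ++ [σ p]).length t 0 with hm
  set q := (p ++ [σ p]) ++ [m] with hq
  have hcq : bmCon q = bmCon (p ++ [σ p]) ++ t := by
    rw [hq, bmCon_append]
    congr 1
    show bmChunk (p ++ [σ p]).length m ++ bmConAux ((p ++ [σ p]).length + 1) [] = t
    rw [hm, bmChunk_bmCode htne]
    simp [bmConAux]
  refine ⟨bmCon (q ++ [σ q]), ?_, ?_⟩
  · rw [← hcq]
    exact ⟨_, (bmCon_append q [σ q]).symm⟩
  · rw [eq_empty_iff_forall_notMem]
    rintro x ⟨hxv, hxS⟩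
    exact hxS.2 m hxv

lemma SII_nwd (τ : Strategy) (p : List ℕ) (c : ℕ) : IsNowhereDense (SII τ p c) := by
  apply nwd_of_blocked (bmCon p) (fun x hx => hx.1)
  intro t htne
  set m := bmCode p.length t c with hm
  set q := p ++ [m] with hq
  have hcq : bmCon q = bmCon p ++ t := by
    rw [hq, bmCon_append]
    congr 1
    show bmChunk p.length m ++ bmConAux (p.length + 1) [] = t
    rw [hm, bmChunk_bmCode htne]
    simp [bmConAux]
  refine ⟨bmCon (q ++ [τ q]), ?_, ?_⟩
  · rw [← hcq]
    exact ⟨_, (bmCon_append q [τ q]).symm⟩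
  · rw [eq_empty_iff_forall_notMem]
    rintro x ⟨hxv, hxS⟩
    exact hxS.2 t htne hxv

lemma bm_sideI {σ : Strategy} {B : Set (Cantor × Baire)}
    (hwin : ∀ z : Baire, PlayIsI σ z → (bmX z, bmW z) ∈ B) :
    IsMeagre (cyl (bmCon [σ []]) \ proj B) := by
  classical
  apply IsMeagre.mono (hs := meager_of_countable_union_nwd (SI σ) (SI_nwd σ))
  intro x hx
  rw [mem_diff] at hx
  by_contra hnot
  simp only [mem_iUnion, not_exists] at hnot
  apply hx.2
  -- construct the play
  set F : List ℕ → ℕ := fun p =>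
    if Even p.length then σ p
    else if h : ∃ m, Pref (bmCon ((p ++ [m]) ++ [σ (p ++ [m])])) x then h.choose else 0
    with hF
  have hFeven : ∀ p : List ℕ, Even p.length → F p = σ p := fun p h => by simp [hF, h]
  have hinv : ∀ k, Pref (bmCon (hist F (2 * k) ++ [σ (hist F (2 * k))])) x := by
    intro k
    induction k with
    | zero =>
      show Pref (bmCon (hist F 0 ++ [σ (hist F 0)])) x
      have : hist F 0 = [] := rfl
      rw [this]
      exact hx.1
    | succ k ih =>
      set p := hist F (2 * k) with hp
      have hplen : Even p.length := by rw [hp, hist_length]; exact even_two_mul k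
      have hq1 : hist F (2 * k + 1) = p ++ [σ p] := by
        show hist F (2 * k) ++ [F (hist F (2 * k))] = p ++ [σ p]
        rw [← hp, hFeven p hplen]
      have hnS := hnot p
      rw [SI, mem_setOf_eq, not_and] at hnS
      have hex := hnS ih
      push_neg at hex
      obtain ⟨m, hm⟩ := hex
      have hcond : ∃ m', Pref (bmCon (((p ++ [σ p]) ++ [m']) ++ [σ ((p ++ [σ p]) ++ [m'])])) x :=
        ⟨m, hm⟩
      have hqlen : ¬ Even (p ++ [σ p]).length := by
        simp only [List.length_append, List.length_cons, List.length_nil]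
        rw [hp, hist_length, Nat.even_add_one]
        exact not_not_intro (even_two_mul k)
      have hFq : F (p ++ [σ p]) = hcond.choose := by
        rw [hF]
        simp only [hqlen, if_false]
        rw [dif_pos hcond]
      have h2 : hist F (2 * (k + 1)) = ((p ++ [σ p]) ++ [hcond.choose]) := by
        have : 2 * (k + 1) = (2 * k + 1) + 1 := by omega
        rw [this]
        show hist F (2 * k + 1) ++ [F (hist F (2 * k + 1))] = _
        rw [hq1, hFq]
      rw [h2]
      exact hcond.choose_spec
  set z := genPlay F with hz
  have hplay : PlayIsI σ z := playIsI_genPlay hFeven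
  have hzB := hwin z hplay
  have hxz : bmX z = x := by
    apply eq_of_pref_all
    intro m
    refine ⟨bmCon (upto z (2 * m + 1)), bmX_pref z _, ?_, ?_⟩
    · rw [hz, upto_genPlay]
      have : hist F (2 * m + 1) = hist F (2 * m) ++ [σ (hist F (2 * m))] := by
        show hist F (2 * m) ++ [F (hist F (2 * m))] = _
        rw [hFeven _ (by rw [hist_length]; exact even_two_mul m)]
      rw [this]
      exact hinv m
    · have := bmCon_length (upto z (2 * m + 1))
      rw [upto_length] at this
      omega
  rw [← hxz]
  exact ⟨bmW z, hzB⟩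

lemma bm_sideII {τ : Strategy} {B : Set (Cantor × Baire)}
    (hwin : ∀ z : Baire, PlayIsII τ z → (bmX z, bmW z) ∉ B) :
    IsMeagre (proj B) := by
  classical
  have hnwd : ∀ pc : List ℕ × ℕ, IsNowhereDense (SII τ pc.1 pc.2) :=
    fun pc => SII_nwd τ pc.1 pc.2
  apply IsMeagre.mono (hs := meager_of_countable_union_nwd _ hnwd)
  intro x hxA
  obtain ⟨w, hw⟩ := hxA
  set G : List ℕ → Prop := fun p =>
    ∃ t : List Bool, t ≠ [] ∧
      Pref (bmCon ((p ++ [bmCode p.length t (w (p.length / 2))]) ++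
        [τ (p ++ [bmCode p.length t (w (p.length / 2))])])) x with hG
  set F : List ℕ → ℕ := fun p =>
    if Even p.length then
      (if h : G p then bmCode p.length h.choose (w (p.length / 2)) else 0)
    else τ p
    with hF
  have hFodd : ∀ p : List ℕ, ¬ Even p.length → F p = τ p := fun p h => by simp [hF, h]
  have hstep : ∀ k, G (hist F (2 * k)) → Pref (bmCon (hist F (2 * k + 2))) x := by
    intro k hGk
    set p := hist F (2 * k) with hp
    have hplen : Even p.length := by rw [hp, hist_length]; exact even_two_mul k
    have hFp : F p = bmCode p.length hGk.choose (w (p.length / 2)) := by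
      rw [hF]
      simp only [hplen, if_true]
      rw [dif_pos hGk]
    have hodd : ¬ Even (p ++ [F p]).length := by
      simp only [List.length_append, List.length_cons, List.length_nil]
      rw [hp, hist_length, Nat.even_add_one]
      exact not_not_intro (even_two_mul k)
    have h2 : hist F (2 * k + 2) = (p ++ [F p]) ++ [τ (p ++ [F p])] := by
      have e1 : hist F (2 * k + 1) = p ++ [F p] := by
        show hist F (2 * k) ++ [F (hist F (2 * k))] = p ++ [F p]
        rw [← hp]
      have e2 : hist F (2 * k + 2) = hist F (2 * k + 1) ++ [F (hist F (2 * k + 1))] := rfl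
      rw [e2, e1, hFodd _ hodd]
    rw [h2, hFp]
    exact hGk.choose_spec.2
  by_cases hall : ∀ k, G (hist F (2 * k))
  · -- II follows τ against the honest play: contradiction with hwin
    set z := genPlay F with hz
    have hplay : PlayIsII τ z := playIsII_genPlay hFodd
    refine absurd ?_ (hwin z hplay)
    have hxz : bmX z = x := by
      apply eq_of_pref_all
      intro m
      refine ⟨bmCon (upto z (2 * m + 2)), bmX_pref z _, ?_, ?_⟩
      · rw [hz, upto_genPlay]
        exact hstep m (hall m)
      · have := bmCon_length (upto z (2 * m + 2))
        rw [upto_length] at this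
        omega
    have hwz : bmW z = w := by
      funext k
      show (dIBM (z (2 * k))).2 = w k
      have hzk : z (2 * k) = F (hist F (2 * k)) := rfl
      set p := hist F (2 * k) with hp
      have hplen : Even p.length := by rw [hp, hist_length]; exact even_two_mul k
      have hGk := hall k
      rw [← hp] at hGk
      have hFp : F p = bmCode p.length hGk.choose (w (p.length / 2)) := by
        rw [hF]
        simp only [hplen, if_true]
        rw [dif_pos hGk]
      have hmod : p.length % 2 = 0 := Nat.even_iff.mp hplen
      have hdiv : p.length / 2 = k := by rw [hp, hist_length]; omega
      rw [hzk, hFp, bmCode, if_pos hmod, dIBM_encode _ hGk.choose_spec.1]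
      show w (p.length / 2) = w k
      rw [hdiv]
    rw [hxz, hwz]
    exact hw
  · push_neg at hall
    have hdp : DecidablePred fun k => ¬ G (hist F (2 * k)) := fun _ => Classical.dec _
    set k0 := @Nat.find _ hdp hall with hk0
    have hnG : ¬ G (hist F (2 * k0)) := @Nat.find_spec _ hdp hall
    have hpref : Pref (bmCon (hist F (2 * k0))) x := by
      match hk1 : k0 with
      | 0 =>
        show Pref (bmCon (hist F 0)) x
        exact pref_nil x
      | (k' + 1) =>
        have hGk' : G (hist F (2 * k')) := by
          by_contra hc
          exact absurd (@Nat.find_min _ hdp hall (m := k') (by omega)) (not_not_intro hc)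
        have := hstep k' hGk'
        have he : 2 * k' + 2 = 2 * (k' + 1) := by omega
        rwa [he] at this
    refine mem_iUnion.mpr ⟨(hist F (2 * k0), w ((hist F (2 * k0)).length / 2)), hpref, ?_⟩
    intro t htne hPref
    exact hnG ⟨t, htne, hPref⟩

theorem bm_dichotomy {n : ℕ}
    (hdet : ∀ A : Set Baire, BoldfacePi (n + 1) Baire A → Determined A)
    {B : Set (Cantor × Baire)} (hB : BoldfacePi (n + 1) (Cantor × Baire) B) :
    IsMeagre (proj B) ∨ ∃ u : List Bool, IsMeagre (cyl u \ proj B) := by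
  have hcont : Continuous (fun z : Baire => (bmX z, bmW z)) :=
    continuous_bmX.prodMk continuous_bmW
  have hP : BoldfacePi (n + 1) Baire ((fun z : Baire => (bmX z, bmW z)) ⁻¹' B) :=
    piPreimage _ hcont hB
  rcases hdet _ hP with ⟨σ, hσ⟩ | ⟨τ, hτ⟩
  · exact Or.inr ⟨bmCon [σ []], bm_sideI hσ⟩
  · exact Or.inl (bm_sideII hτ)

/-! ### Move decoding for the Davis game -/

def dI3 (m : ℕ) : List Bool × List Bool × ℕ :=
  match Encodable.decode (α := List Bool × List Bool × ℕ) m with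
  | some (a, b, c) =>
      if a.length = b.length ∧ a ≠ b ∧ a ≠ [] then (a, b, c) else ([false], [true], 0)
  | none => ([false], [true], 0)

lemma dI3_legal (m : ℕ) :
    (dI3 m).1.length = (dI3 m).2.1.length ∧ (dI3 m).1 ≠ (dI3 m).2.1 ∧ (dI3 m).1 ≠ [] := by
  unfold dI3
  rcases Encodable.decode (α := List Bool × List Bool × ℕ) m with _ | ⟨a, b, c⟩
  · simp
  · dsimp only
    split
    · simpa using ‹_›
    · simp

lemma dI3_encode {a b : List Bool} {c : ℕ} (h : a.length = b.length ∧ a ≠ b ∧ a ≠ []) :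
    dI3 (Encodable.encode ((a, b, c) : List Bool × List Bool × ℕ)) = (a, b, c) := by
  unfold dI3
  rw [Encodable.encodek]
  simp [h]

def dbit (m : ℕ) : Bool := if m = 0 then false else true

def bitCode (b : Bool) : ℕ := bif b then 1 else 0

@[simp] lemma dbit_bitCode (b : Bool) : dbit (bitCode b) = b := by
  cases b <;> rfl

def dvSel (m1 m2 : ℕ) : List Bool := if dbit m2 then (dI3 m1).2.1 else (dI3 m1).1

lemma dvSel_ne_nil (m1 m2 : ℕ) : dvSel m1 m2 ≠ [] := by
  have h := dI3_legal m1
  unfold dvSel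
  split
  · intro hc
    have h1 := h.1
    rw [hc] at h1
    simp only [List.length_nil] at h1
    exact h.2.2 (List.length_eq_zero_iff.mp h1)
  · exact h.2.2

def dvCon : List ℕ → List Bool
  | m1 :: m2 :: p => dvSel m1 m2 ++ dvCon p
  | _ => []

lemma dvCon_append : ∀ (p q : List ℕ), Even p.length → dvCon (p ++ q) = dvCon p ++ dvCon q
  | [], q, _ => by simp [dvCon]
  | [m], q, h => by simp at h
  | m1 :: m2 :: p, q, h => by
    have h' : Even p.length := by simpa [Nat.even_add_one, parity_simps] using h
    show dvSel m1 m2 ++ dvCon (p ++ q) = (dvSel m1 m2 ++ dvCon p) ++ dvCon q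
    rw [dvCon_append p q h', List.append_assoc]

lemma dvCon_length : ∀ p : List ℕ, p.length / 2 ≤ (dvCon p).length
  | [] => by simp [dvCon]
  | [m] => by simp [dvCon]
  | m1 :: m2 :: p => by
    have h1 : 1 ≤ (dvSel m1 m2).length := by
      rcases List.exists_cons_of_ne_nil (dvSel_ne_nil m1 m2) with ⟨a, t, he⟩
      simp [he]
    have := dvCon_length p
    simp only [dvCon, List.length_append, List.length_cons]
    omega

lemma dvCon_pair (p : List ℕ) (m1 m2 : ℕ) (hp : Even p.length) :
    dvCon (p ++ [m1, m2]) = dvCon p ++ dvSel m1 m2 := by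
  rw [dvCon_append p [m1, m2] hp]
  simp [dvCon]

def dvX (z : Baire) : Cantor := fun i => (dvCon (upto z (2 * i + 2))).getD i false

def dvW (z : Baire) : Baire := fun k => (dI3 (z (2 * k))).2.2

lemma dvCon_mono {z : Baire} {a b : ℕ} (h : a ≤ b) :
    dvCon (upto z (2 * a)) <+: dvCon (upto z (2 * b)) := by
  obtain ⟨t, ht⟩ := upto_prefix z (by omega : 2 * a ≤ 2 * b)
  rw [← ht, dvCon_append _ _ (by rw [upto_length]; exact even_two_mul a)]
  exact ⟨_, rfl⟩

lemma dvX_pref (z : Baire) (k : ℕ) : Pref (dvCon (upto z (2 * k))) (dvX z) := by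
  intro i hi
  have hlen : i < (dvCon (upto z (2 * i + 2))).length := by
    have h1 := dvCon_length (upto z (2 * i + 2))
    rw [upto_length] at h1
    omega
  have he : 2 * i + 2 = 2 * (i + 1) := by omega
  rw [dvX, List.getD_eq_getElem _ _ hlen]
  rcases le_or_gt (i + 1) k with h | h
  · have hm := dvCon_mono (z := z) h
    rw [← he] at hm
    exact (prefix_getElem hm hlen).symm
  · have hm := dvCon_mono (z := z) (by omega : k ≤ i + 1)
    rw [← he] at hm
    exact prefix_getElem hm hi

lemma continuous_dvX : Continuous dvX := by
  apply continuous_locally_determined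
  intro i
  exact ⟨2 * i + 2, fun z z' he => by simp only [dvX]; rw [he]⟩

lemma continuous_dvW : Continuous dvW := by
  apply continuous_locally_determined (α := ℕ) (β := ℕ)
  intro k
  refine ⟨2 * k + 1, fun z z' he => ?_⟩
  simp only [dvW]
  have : z (2 * k) = z' (2 * k) := by
    have h1 := pref_upto z (2 * k + 1)
    have h2 : Pref (upto z (2 * k + 1)) z' := by rw [he]; exact pref_upto z' (2 * k + 1)
    exact pref_agree h1 h2 (by simp)
  rw [this]

lemma exists_getElem_ne {s0 s1 : List Bool} (hlen : s0.length = s1.length) (hne : s0 ≠ s1) :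
    ∃ i, ∃ (h0 : i < s0.length) (h1 : i < s1.length), s0[i] ≠ s1[i] := by
  by_contra h
  push_neg at h
  exact hne (List.ext_getElem hlen h)

lemma pref_append_ofFn {L : List Bool} {x : Cantor} (hL : Pref L x) (r : ℕ) :
    Pref (L ++ List.ofFn fun i : Fin r => x (L.length + i.val)) x := by
  intro i hi
  simp only [List.length_append, List.length_ofFn] at hi
  rcases lt_or_ge i L.length with h | h
  · rw [List.getElem_append_left h]
    exact hL i h
  · rw [List.getElem_append_right h, List.getElem_ofFn]
    congr 1
    simp only [Fin.val_mk]
    omega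

/-! ### The Davis dichotomy: countable or contains a continuous injective copy of Cantor space -/

def DSet (τ : Strategy) (p : List ℕ) (c : ℕ) : Set Cantor :=
  {x | Pref (dvCon p) x ∧ ∀ s0 s1 : List Bool,
    s0.length = s1.length → s0 ≠ s1 → s0 ≠ [] →
    ¬ Pref (dvCon (p ++ [Encodable.encode ((s0, s1, c) : List Bool × List Bool × ℕ),
        τ (p ++ [Encodable.encode ((s0, s1, c) : List Bool × List Bool × ℕ)])])) x}

lemma DSet_subsingleton (τ : Strategy) (p : List ℕ) (c : ℕ) (hp : Even p.length) :
    (DSet τ p c).Subsingleton := by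
  intro x hx x' hx'
  by_contra hne
  have hex : ∃ i, x i ≠ x' i := by
    by_contra h
    push_neg at h
    exact hne (funext h)
  classical
  set j := Nat.find hex with hj
  have hjspec : x j ≠ x' j := Nat.find_spec hex
  set L := dvCon p with hL
  have hjge : L.length ≤ j := by
    by_contra h
    push_neg at h
    exact absurd (pref_agree hx.1 hx'.1 h) (Nat.find_spec hex)
  set s0 := List.ofFn (fun i : Fin (j + 1 - L.length) => x (L.length + i.val)) with hs0
  set s1 := List.ofFn (fun i : Fin (j + 1 - L.length) => x' (L.length + i.val)) with hs1
  have hlen : s0.length = s1.length := by simp [hs0, hs1]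
  have hne01 : s0 ≠ s1 := by
    intro hc
    have hc' : (List.ofFn fun i : Fin (j + 1 - L.length) => x (L.length + i.val))
        = List.ofFn fun i : Fin (j + 1 - L.length) => x' (L.length + i.val) := by
      rw [← hs0, ← hs1]; exact hc
    have h1 := congrFun (List.ofFn_inj.mp hc') ⟨j - L.length, by omega⟩
    simp only [Fin.val_mk] at h1
    rw [show L.length + (j - L.length) = j from by omega] at h1
    exact hjspec h1
  have hne0 : s0 ≠ [] := by
    intro hc
    have := congrArg List.length hc
    simp [hs0] at this
    omega
  set m := Encodable.encode ((s0, s1, c) : List Bool × List Bool × ℕ) with hm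
  set b := τ (p ++ [m]) with hb
  have hdI3 : dI3 m = (s0, s1, c) := dI3_encode ⟨hlen, hne01, hne0⟩
  cases hdb : dbit b with
  | false =>
    apply hx.2 s0 s1 hlen hne01 hne0
    have : dvCon (p ++ [m, b]) = L ++ s0 := by
      rw [dvCon_pair p m b hp, dvSel, hdb, if_neg (by simp), hdI3]
    rw [this]
    exact pref_append_ofFn hx.1 _
  | true =>
    apply hx'.2 s0 s1 hlen hne01 hne0
    have : dvCon (p ++ [m, b]) = L ++ s1 := by
      rw [dvCon_pair p m b hp, dvSel, hdb, if_pos (by simp), hdI3]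
    rw [this]
    exact pref_append_ofFn hx'.1 _

lemma dv_sideI {σ : Strategy} {B : Set (Cantor × Baire)}
    (hwin : ∀ z : Baire, PlayIsI σ z → (dvX z, dvW z) ∈ B) :
    ∃ f : Cantor → Cantor, Continuous f ∧ Function.Injective f ∧ ∀ b, f b ∈ proj B := by
  classical
  set Fb : Cantor → List ℕ → ℕ := fun b p =>
    if Even p.length then σ p else bitCode (b ((p.length - 1) / 2)) with hFb
  have hFbeven : ∀ (b : Cantor) (p : List ℕ), Even p.length → Fb b p = σ p :=
    fun b p h => by simp [hFb, h]
  set f : Cantor → Cantor := fun b => dvX (genPlay (Fb b)) with hf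
  have hhist : ∀ (k : ℕ) (b b' : Cantor), (∀ i, 2 * i + 1 < k → b i = b' i) →
      hist (Fb b) k = hist (Fb b') k := by
    intro k
    induction k with
    | zero => intro b b' _; rfl
    | succ k ih =>
      intro b b' hbb
      have he : hist (Fb b) k = hist (Fb b') k := ih b b' (fun i hi => hbb i (by omega))
      show hist (Fb b) k ++ [Fb b (hist (Fb b) k)] = hist (Fb b') k ++ [Fb b' (hist (Fb b') k)]
      rw [he]
      have harg : Fb b (hist (Fb b') k) = Fb b' (hist (Fb b') k) := by
        simp only [hFb, hist_length]
        by_cases hev : Even k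
        · rw [if_pos hev, if_pos hev]
        · rw [if_neg hev, if_neg hev]
          congr 1
          apply hbb
          obtain ⟨i, hi⟩ := Nat.not_even_iff_odd.mp hev
          omega
      rw [harg]
  have hmem : ∀ b : Cantor, ∃ w : Baire, (f b, w) ∈ B := by
    intro b
    have hplay : PlayIsI σ (genPlay (Fb b)) := playIsI_genPlay (hFbeven b)
    exact ⟨dvW (genPlay (Fb b)), hwin _ hplay⟩
  refine ⟨f, ?_, ?_, hmem⟩
  · -- continuity
    apply continuous_locally_determined
    intro i
    refine ⟨2 * i + 2, fun b b' he => ?_⟩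
    have hagree : ∀ j, 2 * j + 1 < 2 * i + 2 → b j = b' j := by
      intro j hj
      have h1 := pref_upto b (2 * i + 2)
      have h2 : Pref (upto b (2 * i + 2)) b' := by rw [he]; exact pref_upto b' (2 * i + 2)
      exact pref_agree h1 h2 (by rw [upto_length]; omega)
    show dvX (genPlay (Fb b)) i = dvX (genPlay (Fb b')) i
    simp only [dvX]
    rw [upto_genPlay, upto_genPlay, hhist (2 * i + 2) b b' hagree]
  · -- injectivity
    intro b b' hfeq
    by_contra hne
    have hex : ∃ i, b i ≠ b' i := by
      by_contra h
      push_neg at h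
      exact hne (funext h)
    set j := Nat.find hex with hj
    have hjspec : b j ≠ b' j := Nat.find_spec hex
    have hagree : ∀ i, 2 * i + 1 < 2 * j → b i = b' i := by
      intro i hi
      have := Nat.find_min hex (m := i) (by omega)
      exact not_not.mp this
    have hpe : hist (Fb b) (2 * j) = hist (Fb b') (2 * j) := hhist (2 * j) b b' hagree
    set p := hist (Fb b) (2 * j) with hp
    have hplen : Even p.length := by rw [hp, hist_length]; exact even_two_mul j
    have hm1 : ∀ bb : Cantor, hist (Fb bb) (2 * j) = p →
        hist (Fb bb) (2 * j + 2) = p ++ [σ p, bitCode (bb j)] := by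
      intro bb hbp
      have e1 : hist (Fb bb) (2 * j + 1) = p ++ [σ p] := by
        show hist (Fb bb) (2 * j) ++ [Fb bb (hist (Fb bb) (2 * j))] = p ++ [σ p]
        rw [hbp, hFbeven bb p hplen]
      have hodd : ¬ Even (p ++ [σ p]).length := by
        simp only [List.length_append, List.length_cons, List.length_nil]
        rw [hp, hist_length, Nat.even_add_one]
        exact not_not_intro (even_two_mul j)
      have e2 : Fb bb (p ++ [σ p]) = bitCode (bb j) := by
        rw [hFb]
        simp only [hodd, if_false]
        congr 2
        simp only [List.length_append, List.length_cons, List.length_nil]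
        rw [hp, hist_length]
        omega
      show hist (Fb bb) (2 * j + 1) ++ [Fb bb (hist (Fb bb) (2 * j + 1))] = _
      rw [e1, e2]
      rw [List.append_assoc]
      rfl
    set s0 := (dI3 (σ p)).1 with hs0
    set s1 := (dI3 (σ p)).2.1 with hs1
    have hleg := dI3_legal (σ p)
    obtain ⟨i0, hi00, hi01, hi0ne⟩ := exists_getElem_ne hleg.1 hleg.2.1
    set L := dvCon p with hL
    have hi00' : i0 < s0.length := hi00
    have hi01' : i0 < s1.length := hi01
    have hkey : ∀ bb : Cantor, hist (Fb bb) (2 * j) = p →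
        Pref (L ++ (if bb j then s1 else s0)) (f bb) := by
      intro bb hbp
      have h1 : Pref (dvCon (upto (genPlay (Fb bb)) (2 * (j + 1)))) (f bb) := dvX_pref _ _
      rw [upto_genPlay] at h1
      rw [show 2 * (j + 1) = 2 * j + 2 from by omega, hm1 bb hbp] at h1
      rw [dvCon_pair p (σ p) (bitCode (bb j)) hplen] at h1
      have : dvSel (σ p) (bitCode (bb j)) = if bb j then s1 else s0 := by
        rw [dvSel, dbit_bitCode]
      rwa [this] at h1
    have hv : f b (L.length + i0) = f b' (L.length + i0) := by rw [hfeq]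
    have hkb := hkey b rfl
    have hkb' := hkey b' hpe.symm
    have hvb : f b (L.length + i0) = (if b j then s1 else s0)[i0]'(by
        cases hbj2 : b j
        · simpa [hbj2] using hi00'
        · simpa [hbj2] using hi01') := by
      have hlt : L.length + i0 < (L ++ (if b j then s1 else s0)).length := by
        cases hbj2 : b j <;> simp [hbj2] <;> omega
      rw [hkb _ hlt, List.getElem_append_right (by omega)]
      congr 1
      omega
    have hvb' : f b' (L.length + i0) = (if b' j then s1 else s0)[i0]'(by
        cases hbj2 : b' j
        · simpa [hbj2] using hi00'
        · simpa [hbj2] using hi01') := by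
      have hlt : L.length + i0 < (L ++ (if b' j then s1 else s0)).length := by
        cases hbj2 : b' j <;> simp [hbj2] <;> omega
      rw [hkb' _ hlt, List.getElem_append_right (by omega)]
      congr 1
      omega
    rw [hvb, hvb'] at hv
    cases hbj : b j <;> cases hbj' : b' j
    · exact hjspec (by rw [hbj, hbj'])
    · rw [hbj, hbj'] at hv
      simp only [if_false, if_true] at hv
      exact hi0ne hv
    · rw [hbj, hbj'] at hv
      simp only [if_false, if_true] at hv
      exact hi0ne hv.symm
    · exact hjspec (by rw [hbj, hbj'])

lemma dv_sideII {τ : Strategy} {B : Set (Cantor × Baire)}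
    (hwin : ∀ z : Baire, PlayIsII τ z → (dvX z, dvW z) ∉ B) :
    (proj B).Countable := by
  classical
  have hcov : proj B ⊆ ⋃ pc : List ℕ × ℕ,
      (if Even pc.1.length then DSet τ pc.1 pc.2 else ∅) := by
    intro x hxA
    obtain ⟨w, hw⟩ := hxA
    set G : List ℕ → Prop := fun p =>
      ∃ s : List Bool × List Bool,
        (s.1.length = s.2.length ∧ s.1 ≠ s.2 ∧ s.1 ≠ []) ∧
        Pref (dvCon (p ++ [Encodable.encode ((s.1, s.2, w (p.length / 2)) : List Bool × List Bool × ℕ),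
          τ (p ++ [Encodable.encode ((s.1, s.2, w (p.length / 2)) : List Bool × List Bool × ℕ)])])) x
      with hG
    set F : List ℕ → ℕ := fun p =>
      if Even p.length then
        (if h : G p then
          Encodable.encode ((h.choose.1, h.choose.2, w (p.length / 2)) : List Bool × List Bool × ℕ)
        else 0)
      else τ p
      with hF
    have hFodd : ∀ p : List ℕ, ¬ Even p.length → F p = τ p := fun p h => by simp [hF, h]
    have hstep : ∀ k, G (hist F (2 * k)) → Pref (dvCon (hist F (2 * k + 2))) x := by
      intro k hGk
      set p := hist F (2 * k) with hp
      have hplen : Even p.length := by rw [hp, hist_length]; exact even_two_mul k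
      have hFp : F p = Encodable.encode
          ((hGk.choose.1, hGk.choose.2, w (p.length / 2)) : List Bool × List Bool × ℕ) := by
        rw [hF]
        simp only [hplen, if_true]
        rw [dif_pos hGk]
      have hodd : ¬ Even (p ++ [F p]).length := by
        simp only [List.length_append, List.length_cons, List.length_nil]
        rw [hp, hist_length, Nat.even_add_one]
        exact not_not_intro (even_two_mul k)
      have h2 : hist F (2 * k + 2) = p ++ [F p, τ (p ++ [F p])] := by
        have e1 : hist F (2 * k + 1) = p ++ [F p] := by
          show hist F (2 * k) ++ [F (hist F (2 * k))] = p ++ [F p]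
          rw [← hp]
        have e2 : hist F (2 * k + 2) = hist F (2 * k + 1) ++ [F (hist F (2 * k + 1))] := rfl
        rw [e2, e1, hFodd _ hodd, List.append_assoc]
        rfl
      rw [h2, hFp]
      exact hGk.choose_spec.2
    by_cases hall : ∀ k, G (hist F (2 * k))
    · exfalso
      set z := genPlay F with hz
      have hplay : PlayIsII τ z := playIsII_genPlay hFodd
      refine absurd ?_ (hwin z hplay)
      have hxz : dvX z = x := by
        apply eq_of_pref_all
        intro m
        refine ⟨dvCon (upto z (2 * m + 2)), ?_, ?_, ?_⟩
        · have := dvX_pref z (m + 1)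
          rwa [show 2 * (m + 1) = 2 * m + 2 from by omega] at this
        · rw [hz, upto_genPlay]
          exact hstep m (hall m)
        · have := dvCon_length (upto z (2 * m + 2))
          rw [upto_length] at this
          omega
      have hwz : dvW z = w := by
        funext k
        show (dI3 (z (2 * k))).2.2 = w k
        have hzk : z (2 * k) = F (hist F (2 * k)) := rfl
        set p := hist F (2 * k) with hp
        have hplen : Even p.length := by rw [hp, hist_length]; exact even_two_mul k
        have hGk := hall k
        rw [← hp] at hGk
        have hFp : F p = Encodable.encode
            ((hGk.choose.1, hGk.choose.2, w (p.length / 2)) : List Bool × List Bool × ℕ) := by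
          rw [hF]
          simp only [hplen, if_true]
          rw [dif_pos hGk]
        have hdiv : p.length / 2 = k := by
          rw [hp, hist_length]
          omega
        rw [hzk, hFp, dI3_encode hGk.choose_spec.1]
        show w (p.length / 2) = w k
        rw [hdiv]
      rw [hxz, hwz]
      exact hw
    · push_neg at hall
      have hdp : DecidablePred fun k => ¬ G (hist F (2 * k)) := fun _ => Classical.dec _
      set k0 := @Nat.find _ hdp hall with hk0
      have hnG : ¬ G (hist F (2 * k0)) := @Nat.find_spec _ hdp hall
      have hpref : Pref (dvCon (hist F (2 * k0))) x := by
        match hk1 : k0 with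
        | 0 =>
          show Pref (dvCon (hist F 0)) x
          exact pref_nil x
        | (k' + 1) =>
          have hGk' : G (hist F (2 * k')) := by
            by_contra hc
            exact absurd (@Nat.find_min _ hdp hall (m := k') (by omega)) (not_not_intro hc)
          have := hstep k' hGk'
          have he : 2 * k' + 2 = 2 * (k' + 1) := by omega
          rwa [he] at this
      refine mem_iUnion.mpr ⟨(hist F (2 * k0), w ((hist F (2 * k0)).length / 2)), ?_⟩
      have hevlen : Even (hist F (2 * k0)).length := by
        rw [hist_length]; exact even_two_mul k0
      rw [if_pos hevlen]
      refine ⟨hpref, ?_⟩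
      intro s0 s1 hlen hne01 hne0 hPref
      exact hnG ⟨(s0, s1), ⟨hlen, hne01, hne0⟩, hPref⟩
  apply Set.Countable.mono hcov
  apply Set.countable_iUnion
  intro pc
  by_cases h : Even pc.1.length
  · rw [if_pos h]
    exact (DSet_subsingleton τ pc.1 pc.2 h).countable
  · rw [if_neg h]
    exact countable_empty

theorem davis_dichotomy {n : ℕ}
    (hdet : ∀ A : Set Baire, BoldfacePi (n + 1) Baire A → Determined A)
    {B : Set (Cantor × Baire)} (hB : BoldfacePi (n + 1) (Cantor × Baire) B) :
    (proj B).Countable ∨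
      ∃ f : Cantor → Cantor, Continuous f ∧ Function.Injective f ∧ ∀ b, f b ∈ proj B := by
  have hcont : Continuous (fun z : Baire => (dvX z, dvW z)) :=
    continuous_dvX.prodMk continuous_dvW
  have hP : BoldfacePi (n + 1) Baire ((fun z : Baire => (dvX z, dvW z)) ⁻¹' B) :=
    piPreimage _ hcont hB
  rcases hdet _ hP with ⟨σ, hσ⟩ | ⟨τ, hτ⟩
  · exact Or.inr (dv_sideI hσ)
  · exact Or.inl (dv_sideII hτ)

/-! ### Category machinery on the product space -/

def Jmap (z : Cantor) : Cantor × Cantor := (fun i => z (2 * i), fun i => z (2 * i + 1))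

def Jinv (p : Cantor × Cantor) : Cantor := fun k => if k % 2 = 0 then p.1 (k / 2) else p.2 (k / 2)

lemma continuous_Jmap : Continuous Jmap := by
  apply Continuous.prodMk
  · exact continuous_pi fun i => continuous_apply (2 * i)
  · exact continuous_pi fun i => continuous_apply (2 * i + 1)

lemma continuous_Jinv : Continuous Jinv := by
  apply continuous_pi
  intro k
  by_cases hk : k % 2 = 0
  · simp only [Jinv, hk, if_true]
    exact (continuous_apply (k / 2)).comp continuous_fst
  · simp only [Jinv, hk, if_false]
    exact (continuous_apply (k / 2)).comp continuous_snd

lemma Jinv_Jmap (z : Cantor) : Jinv (Jmap z) = z := by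
  funext k
  by_cases hk : k % 2 = 0
  · simp only [Jinv, Jmap, hk, if_true]
    congr 1
    omega
  · simp only [Jinv, Jmap, hk, if_false]
    congr 1
    omega

lemma Jmap_Jinv (p : Cantor × Cantor) : Jmap (Jinv p) = p := by
  obtain ⟨a, b⟩ := p
  unfold Jmap Jinv
  refine Prod.ext ?_ ?_
  · funext i
    show (if 2 * i % 2 = 0 then a (2 * i / 2) else b (2 * i / 2)) = a i
    rw [if_pos (by omega)]
    congr 1
    omega
  · funext i
    show (if (2 * i + 1) % 2 = 0 then a ((2 * i + 1) / 2) else b ((2 * i + 1) / 2)) = b i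
    rw [if_neg (by omega)]
    congr 1
    omega

lemma isMeagre_preimage {α β : Type*} [TopologicalSpace α] [TopologicalSpace β]
    {f : α → β} (hc : Continuous f) (ho : IsOpenMap f) {s : Set β} (hs : IsMeagre s) :
    IsMeagre (f ⁻¹' s) :=
  tendsto_residual_of_isOpenMap hc ho hs

lemma isOpenMap_Jmap : IsOpenMap Jmap := by
  intro U hU
  have : Jmap '' U = Jinv ⁻¹' U := by
    ext p
    constructor
    · rintro ⟨z, hz, rfl⟩
      rwa [mem_preimage, Jinv_Jmap]
    · intro hp
      exact ⟨Jinv p, hp, Jmap_Jinv p⟩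
  rw [this]
  exact hU.preimage continuous_Jinv

lemma isOpenMap_Jinv : IsOpenMap Jinv := by
  intro U hU
  have : Jinv '' U = Jmap ⁻¹' U := by
    ext z
    constructor
    · rintro ⟨p, hp, rfl⟩
      rwa [mem_preimage, Jmap_Jinv]
    · intro hz
      exact ⟨Jmap z, hz, Jinv_Jmap z⟩
  rw [this]
  exact hU.preimage continuous_Jmap

lemma open_contains_box {U : Set (Cantor × Cantor)} (hU : IsOpen U) {p : Cantor × Cantor}
    (hp : p ∈ U) :
    ∃ s t : List Bool, p ∈ cyl s ×ˢ cyl t ∧ cyl s ×ˢ cyl t ⊆ U := by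
  rw [isOpen_prod_iff] at hU
  obtain ⟨u, v, hu, hv, hpu, hpv, hsub⟩ := hU p.1 p.2 hp
  obtain ⟨m1, h1, h1'⟩ := open_contains_cyl hu hpu
  obtain ⟨m2, h2, h2'⟩ := open_contains_cyl hv hpv
  exact ⟨_, _, ⟨h1, h2⟩, fun q hq => hsub ⟨h1' hq.1, h2' hq.2⟩⟩

lemma col_closed_bad {G : Set (Cantor × Cantor)} (hG : IsClosed G) (hnwd : IsNowhereDense G) :
    IsMeagre {b : Cantor | ¬ IsMeagre {a : Cantor | (a, b) ∈ G}} := by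
  set D : List Bool → Set Cantor := fun v => {b | ∀ a ∈ cyl v, (a, b) ∈ G} with hD
  have hDclosed : ∀ v, IsClosed (D v) := by
    intro v
    have : D v = ⋂ a ∈ cyl v, (fun b => (a, b)) ⁻¹' G := by
      ext b
      simp [hD]
    rw [this]
    exact isClosed_biInter fun a _ => hG.preimage (Continuous.prodMk_right a)
  have hDnwd : ∀ v, IsNowhereDense (D v) := by
    intro v
    rw [(hDclosed v).isNowhereDense_iff, eq_empty_iff_forall_notMem]
    intro b hb
    obtain ⟨m, hbm, hsub⟩ := open_contains_cyl isOpen_interior hb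
    have hbox : cyl v ×ˢ cyl (upto b m) ⊆ G := by
      rintro ⟨a, b'⟩ ⟨ha, hb'⟩
      exact interior_subset (hsub hb') a ha
    have hboxsub : cyl v ×ˢ cyl (upto b m) ⊆ interior (closure G) :=
      subset_trans (((isClopen_cyl v).2.prod (isClopen_cyl (upto b m)).2).subset_interior_iff.mpr
        (hbox.trans subset_closure)) (by rfl)
    obtain ⟨a0, ha0⟩ := cyl_nonempty v
    obtain ⟨b0, hb0⟩ := cyl_nonempty (upto b m)
    have : (a0, b0) ∈ interior (closure G) := hboxsub ⟨ha0, hb0⟩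
    rw [hnwd] at this
    exact this
  have hsub : {b | ¬ IsMeagre {a | (a, b) ∈ G}} ⊆ ⋃ v : List Bool, D v := by
    intro b hb
    by_contra hnot
    simp only [mem_iUnion, not_exists] at hnot
    apply hb
    apply IsNowhereDense.isMeagre'
    have hcol : IsClosed {a : Cantor | (a, b) ∈ G} :=
      hG.preimage (continuous_id.prodMk continuous_const)
    rw [hcol.isNowhereDense_iff, eq_empty_iff_forall_notMem]
    intro a ha
    obtain ⟨m, ham, hsub'⟩ := open_contains_cyl isOpen_interior ha
    apply hnot (upto a m)
    intro a' ha'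
    exact interior_subset (s := {a : Cantor | (a, b) ∈ G}) (hsub' ha')
  exact IsMeagre.mono hsub (meager_of_countable_union_nwd D hDnwd)

lemma meager_bad_cols {M : Set (Cantor × Cantor)} (hM : IsMeagre M) :
    IsMeagre {b : Cantor | ¬ IsMeagre {a : Cantor | (a, b) ∈ M}} := by
  rw [isMeagre_iff_countable_union_isNowhereDense] at hM
  obtain ⟨S, hSnwd, hScnt, hScov⟩ := hM
  rcases S.eq_empty_or_nonempty with rfl | hSe
  · have : M = ∅ := by
      rw [eq_empty_iff_forall_notMem]
      intro p hp
      simpa using hScov hp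
    rw [this]
    have : {b : Cantor | ¬ IsMeagre {a : Cantor | (a, b) ∈ (∅ : Set (Cantor × Cantor))}} = ∅ := by
      rw [eq_empty_iff_forall_notMem]
      intro b hb
      apply hb
      have : {a : Cantor | (a, b) ∈ (∅ : Set (Cantor × Cantor))} = ∅ := by simp
      rw [this]
      exact IsMeagre.empty
    rw [this]
    exact IsMeagre.empty
  · obtain ⟨g, hg⟩ := Set.Countable.exists_eq_range hScnt hSe
    have hcov : M ⊆ ⋃ n, closure (g n) := by
      intro p hp
      obtain ⟨s, hsS, hps⟩ := hScov hp
      rw [hg] at hsS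
      obtain ⟨n, rfl⟩ := hsS
      exact mem_iUnion.mpr ⟨n, subset_closure hps⟩
    have hsub : {b : Cantor | ¬ IsMeagre {a : Cantor | (a, b) ∈ M}} ⊆
        ⋃ n, {b : Cantor | ¬ IsMeagre {a : Cantor | (a, b) ∈ closure (g n)}} := by
      intro b hb
      by_contra hnot
      simp only [mem_iUnion, not_exists, mem_setOf_eq, not_not] at hnot
      apply hb
      have : {a : Cantor | (a, b) ∈ M} ⊆ ⋃ n, {a : Cantor | (a, b) ∈ closure (g n)} := by
        intro a ha
        obtain ⟨n, hn⟩ := mem_iUnion.mp (hcov ha)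
        exact mem_iUnion.mpr ⟨n, hn⟩
      exact IsMeagre.mono this (isMeagre_iUnion hnot)
    refine IsMeagre.mono hsub (isMeagre_iUnion fun n => ?_)
    apply col_closed_bad isClosed_closure
    apply IsNowhereDense.closure
    apply hSnwd
    rw [hg]
    exact ⟨n, rfl⟩

lemma meager_bad_rows {M : Set (Cantor × Cantor)} (hM : IsMeagre M) :
    IsMeagre {a : Cantor | ¬ IsMeagre {b : Cantor | (a, b) ∈ M}} := by
  have hosw : IsOpenMap (Prod.swap : Cantor × Cantor → Cantor × Cantor) := by
    intro U hU
    have : Prod.swap '' U = Prod.swap ⁻¹' U := by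
      ext q
      constructor
      · rintro ⟨p, hp, rfl⟩
        simpa using hp
      · intro hq
        exact ⟨q.swap, hq, by simp⟩
    rw [this]
    exact hU.preimage continuous_swap
  have hswap : IsMeagre (Prod.swap ⁻¹' M : Set (Cantor × Cantor)) :=
    isMeagre_preimage continuous_swap hosw hM
  have := meager_bad_cols hswap
  have he : {a : Cantor | ¬ IsMeagre {b : Cantor | (a, b) ∈ M}} =
      {b : Cantor | ¬ IsMeagre {a : Cantor | (a, b) ∈ Prod.swap ⁻¹' M}} := by
    ext a
    simp [Set.preimage, Prod.swap]
  rw [he]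
  exact this

lemma meager_union {X : Type*} [TopologicalSpace X] {s t : Set X}
    (hs : IsMeagre s) (ht : IsMeagre t) : IsMeagre (s ∪ t) := by
  rw [IsMeagre, compl_union]
  exact Filter.inter_mem hs ht

lemma sigma_dichotomy {n : ℕ}
    (hdet : ∀ A : Set Baire, BoldfacePi (n + 1) Baire A → Determined A)
    {A : Set Cantor} (hA : BoldfaceSigma (n + 2) Cantor A) :
    IsMeagre A ∨ ∃ u : List Bool, IsMeagre (cyl u \ A) := by
  obtain ⟨B, hB, hBe⟩ := hA
  have hB' : BoldfacePi (n + 1) (Cantor × Baire) B := hB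
  have hAe : A = proj B := hBe
  rw [hAe]
  exact bm_dichotomy hdet hB'

lemma sigma_dichotomy_prod {n : ℕ}
    (hdet : ∀ A : Set Baire, BoldfacePi (n + 1) Baire A → Determined A)
    {A : Set (Cantor × Cantor)} (hA : BoldfaceSigma (n + 2) (Cantor × Cantor) A) :
    IsMeagre A ∨ ∃ s t : List Bool, IsMeagre ((cyl s ×ˢ cyl t) \ A) := by
  have hA' : BoldfaceSigma (n + 2) Cantor (Jmap ⁻¹' A) := sigmaPreimage continuous_Jmap hA
  rcases sigma_dichotomy hdet hA' with h | ⟨u, hu⟩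
  · left
    have he : A = Jinv ⁻¹' (Jmap ⁻¹' A) := by
      ext p
      rw [mem_preimage, mem_preimage, Jmap_Jinv]
    rw [he]
    exact isMeagre_preimage continuous_Jinv isOpenMap_Jinv h
  · right
    have hopen : IsOpen (Jinv ⁻¹' cyl u) := (isClopen_cyl u).2.preimage continuous_Jinv
    have hne : (Jinv ⁻¹' cyl u).Nonempty := by
      refine ⟨Jmap (extendDef u), ?_⟩
      rw [mem_preimage, Jinv_Jmap]
      exact pref_extendDef u
    obtain ⟨p0, hp0⟩ := hne
    obtain ⟨s, t, hpst, hbox⟩ := open_contains_box hopen hp0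
    refine ⟨s, t, ?_⟩
    have h1 : IsMeagre (Jinv ⁻¹' (cyl u \ Jmap ⁻¹' A)) :=
      isMeagre_preimage continuous_Jinv isOpenMap_Jinv hu
    apply IsMeagre.mono (hs := h1)
    intro q hq
    rw [mem_preimage, mem_diff]
    refine ⟨hbox hq.1, ?_⟩
    rw [mem_preimage, Jmap_Jinv]
    exact hq.2

lemma exists_col_nonmeager {W : Set (Cantor × Cantor)} {s t : List Bool}
    (hbox : IsMeagre ((cyl s ×ˢ cyl t) \ W)) {E : Set Cantor} (hE : IsMeagre E) :
    ∃ b ∈ cyl t, b ∉ E ∧ ¬ IsMeagre {a : Cantor | (a, b) ∈ W} := by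
  set M := (cyl s ×ˢ cyl t) \ W with hM
  have hbad := meager_bad_cols hbox
  have hne : (cyl t \ (E ∪ {b : Cantor | ¬ IsMeagre {a : Cantor | (a, b) ∈ M}})).Nonempty := by
    by_contra h
    rw [not_nonempty_iff_eq_empty, diff_eq_empty] at h
    exact not_isMeagre_of_isOpen (isClopen_cyl t).2 (cyl_nonempty t)
      (IsMeagre.mono h (meager_union hE hbad))
  obtain ⟨b, hbt, hbn⟩ := hne
  refine ⟨b, hbt, fun hEb => hbn (Or.inl hEb), ?_⟩
  intro hWm
  have hcolM : IsMeagre {a : Cantor | (a, b) ∈ M} := not_not.mp (fun hc => hbn (Or.inr hc))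
  have hsub : cyl s ⊆ {a : Cantor | (a, b) ∈ W} ∪ {a : Cantor | (a, b) ∈ M} := by
    intro a ha
    by_cases haW : (a, b) ∈ W
    · exact Or.inl haW
    · exact Or.inr ⟨⟨ha, hbt⟩, haW⟩
  exact not_isMeagre_of_isOpen (isClopen_cyl s).2 (cyl_nonempty s)
    (IsMeagre.mono hsub (meager_union hWm hcolM))


/-- If every boldface `Π¹ₙ₊₁` subset of Baire space is determined,
then every boldface `Σ¹ₙ₊₂` relation `R ⊆ 2^ω × 2^ω` which is the graph of a
well-ordering of its field has countable field. -/
theorem countable_field_of_sigma_wellordering_of_det (n : ℕ)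
    (hdet : ∀ A : Set Baire, BoldfacePi (n + 1) Baire A → Determined A)
    (R : Set (Cantor × Cantor))
    (hR : BoldfaceSigma (n + 2) (Cantor × Cantor) R)
    (hwo : IsWellOrderingGraph R) :
    (fieldOf R).Countable := by
  classical
  obtain ⟨B0, hB0, hB0e⟩ := hR
  have hB0' : BoldfacePi (n + 1) ((Cantor × Cantor) × Baire) B0 := hB0
  have hfield : fieldOf R = {x | (x, x) ∈ R} := by
    ext x
    constructor
    · intro hx
      exact hwo.1 x hx
    · intro hx
      exact ⟨x, Or.inl hx⟩
  set Bd : Set (Cantor × Baire) := (fun q : Cantor × Baire => ((q.1, q.1), q.2)) ⁻¹' B0 with hBd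
  have hBdpi : BoldfacePi (n + 1) (Cantor × Baire) Bd :=
    piPreimage _ ((continuous_fst.prodMk continuous_fst).prodMk continuous_snd) hB0'
  have hproj : proj Bd = fieldOf R := by
    ext x
    rw [hfield]
    simp only [proj, mem_setOf_eq, hBd, mem_preimage]
    constructor
    · rintro ⟨wt, hwt⟩
      have : (x, x) ∈ {p : Cantor × Cantor | ∃ y : Baire, (p, y) ∈ B0} := ⟨wt, hwt⟩
      rwa [← hB0e] at this
    · intro hx
      rw [hB0e] at hx
      exact hx
  rcases davis_dichotomy hdet hBdpi with hcnt | ⟨f, hfc, hfi, hfmem⟩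
  · rwa [hproj] at hcnt
  · exfalso
    have hfX : ∀ b, f b ∈ fieldOf R := fun b => hproj ▸ hfmem b
    set Q : Set (Cantor × Cantor) := (fun p : Cantor × Cantor => (f p.1, f p.2)) ⁻¹' R with hQ
    have hRs : BoldfaceSigma (n + 2) (Cantor × Cantor) R := ⟨B0, hB0, hB0e⟩
    have hQs : BoldfaceSigma (n + 2) (Cantor × Cantor) Q :=
      sigmaPreimage ((hfc.comp continuous_fst).prodMk (hfc.comp continuous_snd)) hRs
    have htot : ∀ a b : Cantor, (a, b) ∈ Q ∨ (b, a) ∈ Q := fun a b =>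
      hwo.2.2.2.1 _ (hfX a) _ (hfX b)
    have hanti : ∀ a b : Cantor, (a, b) ∈ Q → (b, a) ∈ Q → a = b := fun a b h1 h2 =>
      hfi (hwo.2.1 _ _ h1 h2)
    have hmin : ∀ N : Set Cantor, N.Nonempty → ∃ m ∈ N, ∀ b ∈ N, (m, b) ∈ Q := by
      intro N hN
      obtain ⟨m', hm'1, hm'2⟩ := hwo.2.2.2.2 (f '' N)
        (by rintro y ⟨b, -, rfl⟩; exact hfX b) (hN.image f)
      obtain ⟨m, hmN, rfl⟩ := hm'1
      exact ⟨m, hmN, fun b hb => hm'2 (f b) ⟨b, hb, rfl⟩⟩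
    set Seg : Cantor → Set Cantor := fun b => {a | (a, b) ∈ Q} with hSeg
    have hSegSigma : ∀ b, BoldfaceSigma (n + 2) Cantor (Seg b) := fun b =>
      sigmaPreimage (continuous_id.prodMk continuous_const) hQs
    have hNne : ∃ b, ¬ IsMeagre (Seg b) := by
      by_cases hQm : IsMeagre Q
      · have hbadrows := meager_bad_rows hQm
        have huniv : ¬ IsMeagre (univ : Set Cantor) :=
          not_isMeagre_of_isOpen isOpen_univ ⟨fun _ => false, trivial⟩
        have hne : ((univ : Set Cantor) \
            {a : Cantor | ¬ IsMeagre {b : Cantor | (a, b) ∈ Q}}).Nonempty := by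
          by_contra h
          rw [not_nonempty_iff_eq_empty, diff_eq_empty] at h
          exact huniv (IsMeagre.mono h hbadrows)
        obtain ⟨a0, -, ha0⟩ := hne
        have hrow : IsMeagre {b : Cantor | (a0, b) ∈ Q} := not_not.mp ha0
        refine ⟨a0, fun hm => ?_⟩
        have hcov : (univ : Set Cantor) ⊆ Seg a0 ∪ {b : Cantor | (a0, b) ∈ Q} := by
          intro b _
          rcases htot b a0 with h | h
          · exact Or.inl h
          · exact Or.inr h
        exact huniv (IsMeagre.mono hcov (meager_union hm hrow))
      · rcases sigma_dichotomy_prod hdet hQs with h | ⟨s, t, hst⟩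
        · exact absurd h hQm
        · obtain ⟨b, -, -, hcol⟩ := exists_col_nonmeager hst IsMeagre.empty
          exact ⟨b, hcol⟩
    obtain ⟨b0, hb0N, hb0min⟩ := hmin {b : Cantor | ¬ IsMeagre (Seg b)} hNne
    set S := Seg b0 with hS
    have hSnm : ¬ IsMeagre S := hb0N
    have hsegmeag : ∀ b ∈ S, b ≠ b0 → IsMeagre (Seg b) := by
      intro b hbS hbne
      by_contra hc
      exact hbne (hanti b b0 hbS (hb0min b hc))
    set W : Set (Cantor × Cantor) :=
      Q ∩ ((fun p : Cantor × Cantor => p.1) ⁻¹' S) ∩ ((fun p : Cantor × Cantor => p.2) ⁻¹' S)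
      with hW
    have hWs : BoldfaceSigma (n + 2) (Cantor × Cantor) W := by
      apply sigmaInter
      · exact sigmaInter hQs (sigmaPreimage continuous_fst (hSegSigma b0))
      · exact sigmaPreimage continuous_snd (hSegSigma b0)
    have hWm : IsMeagre W := by
      by_contra hWnm
      rcases sigma_dichotomy_prod hdet hWs with h | ⟨s, t, hst⟩
      · exact hWnm h
      · obtain ⟨b, -, hbE, hcol⟩ := exists_col_nonmeager hst (singleton_meager b0)
        have hbne : b ≠ b0 := fun he => hbE (by rw [he]; rfl)
        by_cases hbS : b ∈ S
        · apply hcol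
          apply IsMeagre.mono (hs := hsegmeag b hbS hbne)
          intro a ha
          exact ha.1.1
        · apply hcol
          have : {a : Cantor | (a, b) ∈ W} = ∅ := by
            rw [eq_empty_iff_forall_notMem]
            intro a ha
            exact hbS ha.2
          rw [this]
          exact IsMeagre.empty
    have hbadrows := meager_bad_rows hWm
    have hne2 : (S \ ({b0} ∪ {a : Cantor | ¬ IsMeagre {b : Cantor | (a, b) ∈ W}})).Nonempty := by
      by_contra h
      rw [not_nonempty_iff_eq_empty, diff_eq_empty] at h
      exact hSnm (IsMeagre.mono h (meager_union (singleton_meager b0) hbadrows))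
    obtain ⟨a0, ha0S, ha0n⟩ := hne2
    have ha0ne : a0 ≠ b0 := fun he => ha0n (Or.inl (by rw [he]; rfl))
    have hrowm : IsMeagre {b : Cantor | (a0, b) ∈ W} := not_not.mp (fun hc => ha0n (Or.inr hc))
    have hSa0m : IsMeagre (Seg a0) := hsegmeag a0 ha0S ha0ne
    apply hSnm
    have hcov : S ⊆ {b : Cantor | (a0, b) ∈ W} ∪ (Seg a0 ∪ {a0}) := by
      intro b hbS
      by_cases h : b ∈ Seg a0 ∪ {a0}
      · exact Or.inr h
      · rcases htot a0 b with hq | hq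
        · exact Or.inl ⟨⟨hq, ha0S⟩, hbS⟩
        · exfalso
          apply h
          by_cases hb0 : b = a0
          · exact Or.inr (by rw [hb0]; rfl)
          · exact Or.inl hq
    exact IsMeagre.mono (hs :=
      (meager_union hrowm (meager_union hSa0m (singleton_meager a0)))) hcov


end GaleStewart
end

section
/- Let n ≥ 0 and assume that every boldface Σ¹_{n+2} subset of Cantor space 2^ω has the perfect set property. Then if R ⊆ 2^ω × 2^ω is a boldface Σ¹_{n+2} set which is the graph of a well-ordering of its field X ⊆ 2^ω, the set X is countable. -/
namespace GaleStewart

/-- A perfect subset of Cantor space: nonempty, closed, and without isolated points. -/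
def IsPerfectSet (P : Set Cantor) : Prop :=
  P.Nonempty ∧ Perfect P

/-- The perfect set property for `A ⊆ 2^ω`: `A` is countable or has a perfect subset. -/
def PerfectSetProperty (A : Set Cantor) : Prop :=
  A.Countable ∨ ∃ P : Set Cantor, P ⊆ A ∧ IsPerfectSet P


section WellOrderingAux

open Function Set

/-! ### Closure of the projective pointclasses under continuous preimages -/

lemma piAux_preimage (m : ℕ) : ∀ {X Y : Type} [tX : TopologicalSpace X] [tY : TopologicalSpace Y]
    (f : X → Y), Continuous f → ∀ {B : Set Y},
    boldfacePiAux m Y tY B → boldfacePiAux m X tX (f ⁻¹' B) := by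
  induction m with
  | zero =>
    intro X Y tX tY f hf B hB
    simp only [boldfacePiAux] at hB ⊢
    exact hB.preimage hf
  | succ m ih =>
    intro X Y tX tY f hf B hB
    simp only [boldfacePiAux] at hB ⊢
    obtain ⟨B', hB', hproj⟩ := hB
    refine ⟨(fun p : X × Baire => (f p.1, p.2)) ⁻¹' B',
      ih _ ((hf.comp continuous_fst).prodMk continuous_snd) hB', ?_⟩
    rw [show (f ⁻¹' B)ᶜ = f ⁻¹' Bᶜ from rfl, hproj]
    rfl

lemma sigma_preimage {X Y : Type} [TopologicalSpace X] [TopologicalSpace Y] (k : ℕ)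
    (f : X → Y) (hf : Continuous f) {A : Set Y} (hA : BoldfaceSigma k Y A) :
    BoldfaceSigma k X (f ⁻¹' A) := by
  obtain ⟨B, hB, hAeq⟩ := hA
  refine ⟨(fun p : X × Baire => (f p.1, p.2)) ⁻¹' B,
    piAux_preimage _ _ ((hf.comp continuous_fst).prodMk continuous_snd) hB, ?_⟩
  rw [hAeq]
  rfl

/-! ### Coding a Cantor witness together with a Baire witness into one Baire witness -/

/-- Decoding map extracting a Cantor-space point from the even coordinates. -/
def chi : Baire → Cantor := fun v i => decide (v (2 * i) ≠ 0)

/-- Decoding map extracting a Baire-space point from the odd coordinates. -/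
def tau : Baire → Baire := fun v i => v (2 * i + 1)

lemma chi_cont : Continuous chi := by
  apply continuous_pi
  intro i
  exact Continuous.comp (continuous_of_discreteTopology (f := fun n : ℕ => decide (n ≠ 0)))
    (continuous_apply (2 * i))

lemma tau_cont : Continuous tau :=
  continuous_pi fun i => continuous_apply (2 * i + 1)

lemma chi_tau_surj (x : Cantor) (w : Baire) : ∃ v : Baire, chi v = x ∧ tau v = w := by
  refine ⟨fun j => if j % 2 = 0 then (cond (x (j / 2)) 1 0) else w (j / 2), ?_, ?_⟩
  · funext i
    have h1 : (2 * i) % 2 = 0 := by omega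
    have h2 : (2 * i) / 2 = i := by omega
    simp only [chi, h1, if_pos, h2]
    cases x i <;> simp
  · funext i
    have h1 : (2 * i + 1) % 2 = 1 := by omega
    have h2 : (2 * i + 1) / 2 = i := by omega
    simp [tau, h1, h2]

/-- Projections along a Cantor coordinate preserve the pointclass `Σ¹ₖ`. -/
lemma sigma_proj_fst {k : ℕ} {A : Set (Cantor × Cantor)}
    (hA : BoldfaceSigma k (Cantor × Cantor) A) :
    BoldfaceSigma k Cantor {y | ∃ x, (x, y) ∈ A} := by
  obtain ⟨B, hB, hAeq⟩ := hA
  refine ⟨(fun p : Cantor × Baire => ((chi p.2, p.1), tau p.2)) ⁻¹' B,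
    piAux_preimage _ _
      (((chi_cont.comp continuous_snd).prodMk continuous_fst).prodMk
        (tau_cont.comp continuous_snd)) hB, ?_⟩
  ext y
  simp only [Set.mem_setOf_eq]
  constructor
  · rintro ⟨x, hx⟩
    rw [hAeq] at hx
    obtain ⟨v', hv'⟩ := hx
    obtain ⟨v, hv1, hv2⟩ := chi_tau_surj x v'
    refine ⟨v, ?_⟩
    show ((chi v, y), tau v) ∈ B
    rw [hv1, hv2]
    exact hv'
  · rintro ⟨v, hv⟩
    refine ⟨chi v, ?_⟩
    rw [hAeq]
    exact ⟨tau v, hv⟩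

lemma sigma_proj_snd {k : ℕ} {A : Set (Cantor × Cantor)}
    (hA : BoldfaceSigma k (Cantor × Cantor) A) :
    BoldfaceSigma k Cantor {y | ∃ x, (y, x) ∈ A} := by
  obtain ⟨B, hB, hAeq⟩ := hA
  refine ⟨(fun p : Cantor × Baire => ((p.1, chi p.2), tau p.2)) ⁻¹' B,
    piAux_preimage _ _
      ((continuous_fst.prodMk (chi_cont.comp continuous_snd)).prodMk
        (tau_cont.comp continuous_snd)) hB, ?_⟩
  ext y
  simp only [Set.mem_setOf_eq]
  constructor
  · rintro ⟨x, hx⟩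
    rw [hAeq] at hx
    obtain ⟨v', hv'⟩ := hx
    obtain ⟨v, hv1, hv2⟩ := chi_tau_surj x v'
    refine ⟨v, ?_⟩
    show ((y, chi v), tau v) ∈ B
    rw [hv1, hv2]
    exact hv'
  · rintro ⟨v, hv⟩
    refine ⟨chi v, ?_⟩
    rw [hAeq]
    exact ⟨tau v, hv⟩

/-! ### The "flip the first bit" involution of Cantor space -/

def flip0 : Cantor → Cantor := fun z i => if i = 0 then !(z 0) else z i

lemma flip0_flip0 (z : Cantor) : flip0 (flip0 z) = z := by
  funext i
  by_cases h : i = 0 <;> simp [flip0, h]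

lemma flip0_injective : Function.Injective flip0 :=
  Function.LeftInverse.injective flip0_flip0

lemma flip0_ne (z : Cantor) : flip0 z ≠ z := by
  intro h
  have h0 := congrFun h 0
  simp [flip0] at h0

lemma continuous_flip0 : Continuous flip0 := by
  apply continuous_pi
  intro i
  by_cases h : i = 0
  · have he : (fun z : Cantor => flip0 z i) = fun z => !(z 0) := by
      funext z; show (if i = 0 then !(z 0) else z i) = _; rw [if_pos h]
    rw [he]
    exact Continuous.comp (continuous_of_discreteTopology (f := Bool.not)) (continuous_apply 0)
  · have he : (fun z : Cantor => flip0 z i) = fun z => z i := by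
      funext z; show (if i = 0 then !(z 0) else z i) = _; rw [if_neg h]
    rw [he]
    exact continuous_apply i

/-! ### Cantor space is uncountable -/

lemma cantor_uncountable : ¬ (Set.univ : Set Cantor).Countable := by
  classical
  intro h
  rw [Set.countable_univ_iff] at h
  have hinj : Function.Injective (fun s : Set ℕ => (fun n => decide (n ∈ s) : Cantor)) := by
    intro s t hst
    ext n
    have h1 := congrFun hst n
    simpa only [decide_eq_decide] using h1
  obtain ⟨g, hg⟩ := Countable.exists_injective_nat Cantor
  exact Function.cantor_injective
    (g ∘ (fun s : Set ℕ => (fun n => decide (n ∈ s) : Cantor))) (hg.comp hinj)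

/-! ### From the perfect set property to continuous injections -/

lemma embed_of_psp {n : ℕ}
    (hpsp : ∀ A : Set Cantor, BoldfaceSigma (n + 2) Cantor A → PerfectSetProperty A)
    {A : Set Cantor} (hA : BoldfaceSigma (n + 2) Cantor A) (hunc : ¬ A.Countable) :
    ∃ u : Cantor → Cantor, Continuous u ∧ Function.Injective u ∧ Set.range u ⊆ A := by
  rcases hpsp A hA with h | ⟨P, hPA, hPne, hPperf⟩
  · exact absurd h hunc
  · letI := TopologicalSpace.upgradeIsCompletelyMetrizable Cantor
    obtain ⟨f, hrange, hcont, hinj⟩ := hPperf.exists_nat_bool_injection hPne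
    exact ⟨f, hcont, hinj, hrange.trans hPA⟩

/-! ### The main construction: an infinite descending sequence -/

lemma main_aux (n : ℕ)
    (hpsp : ∀ A : Set Cantor, BoldfaceSigma (n + 2) Cantor A → PerfectSetProperty A)
    (R : Set (Cantor × Cantor))
    (hR : BoldfaceSigma (n + 2) (Cantor × Cantor) R)
    (hanti : ∀ x y, (x, y) ∈ R → (y, x) ∈ R → x = y)
    (htot : ∀ x ∈ fieldOf R, ∀ y ∈ fieldOf R, (x, y) ∈ R ∨ (y, x) ∈ R)
    (hleast : ∀ S : Set Cantor, S ⊆ fieldOf R → S.Nonempty → ∃ m ∈ S, ∀ y ∈ S, (m, y) ∈ R)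
    (u0 : Cantor → Cantor) (h0c : Continuous u0) (h0i : Function.Injective u0)
    (h0r : Set.range u0 ⊆ fieldOf R) : False := by
  classical
  -- Step: from a continuous injection into the field, produce a "descent" reparametrization.
  have step : ∀ u : Cantor → Cantor, Continuous u → Function.Injective u →
      Set.range u ⊆ fieldOf R →
      ∃ w : Cantor → Cantor, Continuous w ∧ Function.Injective w ∧
        ∀ z, (u (flip0 (w z)), u (w z)) ∈ R := by
    intro u hc hi hr
    have hZsigma : BoldfaceSigma (n + 2) Cantor ((fun z => (u (flip0 z), u z)) ⁻¹' R) :=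
      sigma_preimage _ _ ((hc.comp continuous_flip0).prodMk hc) hR
    have hZunc : ¬ ((fun z => (u (flip0 z), u z)) ⁻¹' R).Countable := by
      intro hcount
      apply cantor_uncountable
      apply Set.Countable.mono _ (hcount.union (hcount.preimage flip0_injective))
      intro z _
      have h1 : u z ∈ fieldOf R := hr ⟨z, rfl⟩
      have h2 : u (flip0 z) ∈ fieldOf R := hr ⟨flip0 z, rfl⟩
      rcases htot _ h2 _ h1 with h | h
      · exact Or.inl h
      · refine Or.inr ?_
        show (u (flip0 (flip0 z)), u (flip0 z)) ∈ R
        rw [flip0_flip0]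
        exact h
    obtain ⟨w, hwc, hwi, hwr⟩ := embed_of_psp hpsp hZsigma hZunc
    exact ⟨w, hwc, hwi, fun z => hwr ⟨z, rfl⟩⟩
  -- Bundle continuous injections into the field of `R`.
  let T := {u : Cantor → Cantor // Continuous u ∧ Function.Injective u ∧ Set.range u ⊆ fieldOf R}
  have stepT : ∀ u : T, ∃ w : Cantor → Cantor, Continuous w ∧ Function.Injective w ∧
      ∀ z, (u.1 (flip0 (w z)), u.1 (w z)) ∈ R := fun u => step u.1 u.2.1 u.2.2.1 u.2.2.2
  choose wf hwc hwi hwR using stepT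
  let U : ℕ → T := fun k => Nat.rec (motive := fun _ => T) ⟨u0, h0c, h0i, h0r⟩
    (fun _ p => ⟨p.1 ∘ flip0 ∘ wf p,
      p.2.1.comp (continuous_flip0.comp (hwc p)),
      p.2.2.1.comp (flip0_injective.comp (hwi p)),
      by rintro y ⟨z, rfl⟩; exact p.2.2.2 ⟨flip0 (wf p z), rfl⟩⟩) k
  let w : ℕ → Cantor → Cantor := fun k => wf (U k)
  have hwinj : ∀ k, Function.Injective (w k) := fun k => hwi (U k)
  -- Iterated reparametrizations, their ranges, and the thread through them.
  let Wc : ℕ → ℕ → Cantor → Cantor := fun j =>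
    Nat.rec (motive := fun _ => ℕ → Cantor → Cantor) (fun _ => id)
      (fun _ ih k => w k ∘ ih (k + 1)) j
  have hWcont : ∀ j k, Continuous (Wc j k) := by
    intro j
    induction j with
    | zero => intro k; exact continuous_id
    | succ j ih =>
      intro k
      show Continuous (w k ∘ Wc j (k + 1))
      exact (hwc (U k)).comp (ih (k + 1))
  let S : ℕ → ℕ → Set Cantor := fun j k => Set.range (Wc j k)
  have hSimg : ∀ j k, S (j + 1) k = w k '' S j (k + 1) := by
    intro j k
    show Set.range (w k ∘ Wc j (k + 1)) = _
    exact Set.range_comp _ _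
  have hSnested : ∀ j k, S (j + 1) k ⊆ S j k := by
    intro j
    induction j with
    | zero => intro k y _; exact ⟨y, rfl⟩
    | succ j ih =>
      intro k
      rw [hSimg (j + 1) k, hSimg j k]
      exact Set.image_mono (ih (k + 1))
  have hScompact : ∀ j k, IsCompact (S j k) := fun j k => isCompact_range (hWcont j k)
  have hSne : ∀ j k, (S j k).Nonempty := fun j k => Set.range_nonempty _
  let Tk : ℕ → Set Cantor := fun k => ⋂ j, S j k
  have hT0 : (Tk 0).Nonempty :=
    IsCompact.nonempty_iInter_of_sequence_nonempty_isCompact_isClosed _ (fun j => hSnested j 0)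
      (fun j => hSne j 0) (hScompact 0 0) (fun j => (hScompact j 0).isClosed)
  have hpull : ∀ k t, t ∈ Tk k → ∃ t', t' ∈ Tk (k + 1) ∧ w k t' = t := by
    intro k t ht
    have h1 : t ∈ S (0 + 1) k := Set.mem_iInter.mp ht 1
    rw [hSimg 0 k] at h1
    obtain ⟨t', ht', hw⟩ := h1
    refine ⟨t', Set.mem_iInter.mpr fun j => ?_, hw⟩
    have hj : t ∈ S (j + 1) k := Set.mem_iInter.mp ht (j + 1)
    rw [hSimg j k] at hj
    obtain ⟨y, hy, hyw⟩ := hj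
    have hyt : y = t' := hwinj k (by rw [hyw, hw])
    rwa [← hyt]
  let th : (k : ℕ) → {t : Cantor // t ∈ Tk k} := fun k =>
    Nat.rec (motive := fun k => {t : Cantor // t ∈ Tk k}) ⟨hT0.choose, hT0.choose_spec⟩
      (fun k p => ⟨(hpull k p.1 p.2).choose, (hpull k p.1 p.2).choose_spec.1⟩) k
  have hth : ∀ k, w k (th (k + 1)).1 = (th k).1 := fun k =>
    (hpull k (th k).1 (th k).2).choose_spec.2
  -- The descending sequence.
  let x : ℕ → Cantor := fun k => (U k).1 (th k).1
  have hx : ∀ k, (x (k + 1), x k) ∈ R ∧ x (k + 1) ≠ x k := by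
    intro k
    have hxk1 : x (k + 1) = (U k).1 (flip0 (th k).1) := by
      show (U k).1 (flip0 (w k (th (k + 1)).1)) = (U k).1 (flip0 (th k).1)
      rw [hth k]
    have hmem := hwR (U k) (th (k + 1)).1
    rw [show wf (U k) (th (k + 1)).1 = (th k).1 from hth k] at hmem
    constructor
    · rw [hxk1]; exact hmem
    · rw [hxk1]
      intro he
      exact flip0_ne (th k).1 ((U k).2.2.1 he)
  -- A descending sequence contradicts the least element property.
  have hsub : Set.range x ⊆ fieldOf R := by
    rintro y ⟨k, rfl⟩
    exact ⟨x (k + 1), Or.inl (hx k).1⟩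
  obtain ⟨mm, hmS, hm⟩ := hleast (Set.range x) hsub ⟨x 0, 0, rfl⟩
  obtain ⟨k0, rfl⟩ := hmS
  exact (hx k0).2 (hanti _ _ (hx k0).1 (hm (x (k0 + 1)) ⟨k0 + 1, rfl⟩))

end WellOrderingAux

/-- If every boldface `Σ¹ₙ₊₂` subset of Cantor space has the perfect
set property, then every boldface `Σ¹ₙ₊₂` relation `R ⊆ 2^ω × 2^ω` which is the graph
of a well-ordering of its field has countable field. -/
theorem countable_field_of_sigma_wellordering_of_psp (n : ℕ)
    (hpsp : ∀ A : Set Cantor, BoldfaceSigma (n + 2) Cantor A → PerfectSetProperty A)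
    (R : Set (Cantor × Cantor))
    (hR : BoldfaceSigma (n + 2) (Cantor × Cantor) R)
    (hwo : IsWellOrderingGraph R) :
    (fieldOf R).Countable := by
  classical
  by_contra hX
  obtain ⟨href, hanti, htrans, htot, hleast⟩ := hwo
  have hsplit : fieldOf R = {y | ∃ x, (x, y) ∈ R} ∪ {y | ∃ x, (y, x) ∈ R} := by
    ext y
    constructor
    · rintro ⟨x, h | h⟩
      · exact Or.inl ⟨x, h⟩
      · exact Or.inr ⟨x, h⟩
    · rintro (⟨x, h⟩ | ⟨x, h⟩)
      · exact ⟨x, Or.inl h⟩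
      · exact ⟨x, Or.inr h⟩
  have hone : ¬ {y | ∃ x, (x, y) ∈ R}.Countable ∨ ¬ {y | ∃ x, (y, x) ∈ R}.Countable := by
    by_contra hc
    push_neg at hc
    exact hX (hsplit ▸ hc.1.union hc.2)
  have hsub1 : {y | ∃ x, (x, y) ∈ R} ⊆ fieldOf R := fun y hy =>
    Exists.elim hy fun x h => ⟨x, Or.inl h⟩
  have hsub2 : {y | ∃ x, (y, x) ∈ R} ⊆ fieldOf R := fun y hy =>
    Exists.elim hy fun x h => ⟨x, Or.inr h⟩
  have hu0 : ∃ u : Cantor → Cantor,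
      Continuous u ∧ Function.Injective u ∧ Set.range u ⊆ fieldOf R := by
    rcases hone with h | h
    · obtain ⟨u, hc, hi, hr⟩ := embed_of_psp hpsp (sigma_proj_fst hR) h
      exact ⟨u, hc, hi, hr.trans hsub1⟩
    · obtain ⟨u, hc, hi, hr⟩ := embed_of_psp hpsp (sigma_proj_snd hR) h
      exact ⟨u, hc, hi, hr.trans hsub2⟩
  obtain ⟨u0, h0c, h0i, h0r⟩ := hu0
  exact main_aux n hpsp R hR hanti htot hleast u0 h0c h0i h0r


end GaleStewart
end

section
/- If R ⊆ 2^ω × 2^ω is an analytic set (i.e., R is empty or a continuous image of Baire space ℕ^ω) and R is the graph of a well-ordering of its field X ⊆ 2^ω, then X is countable. -/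
open Set Topology TopologicalSpace MeasureTheory Function
open scoped ENNReal

section Cond
variable {C : Type*} [TopologicalSpace C] [SecondCountableTopology C]

/-- In a second countable space, an uncountable set has two distinct condensation points. -/
lemma exists_two_condensation_points {S : Set C} (h : ¬S.Countable) :
    ∃ y₀ ∈ S, ∃ y₁ ∈ S, y₀ ≠ y₁ ∧ (∀ U ∈ 𝓝 y₀, ¬(S ∩ U).Countable) ∧
      (∀ U ∈ 𝓝 y₁, ¬(S ∩ U).Countable) := by
  classical
  set K : Set (Set C) := {U ∈ countableBasis C | (S ∩ U).Countable} with hK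
  have hKc : K.Countable := (countable_countableBasis C).mono (sep_subset _ _)
  set T : Set C := S \ ⋃₀ K with hT
  have hSW : (S ∩ ⋃₀ K).Countable := by
    rw [sUnion_eq_biUnion, inter_iUnion₂]
    exact Countable.biUnion hKc fun U hU => hU.2
  have hTunc : ¬T.Countable := by
    intro hTc
    exact h (((hSW.union hTc).mono) (fun x hx => by
      by_cases hxW : x ∈ ⋃₀ K
      · exact Or.inl ⟨hx, hxW⟩
      · exact Or.inr ⟨hx, hxW⟩))
  have hcond : ∀ y ∈ T, ∀ U ∈ 𝓝 y, ¬(S ∩ U).Countable := by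
    intro y hy U hU hc
    obtain ⟨V, hVb, hyV, hVU⟩ := (isBasis_countableBasis C).mem_nhds_iff.1 hU
    have : (S ∩ V).Countable := hc.mono (inter_subset_inter_right _ hVU)
    exact hy.2 ⟨V, ⟨hVb, this⟩, hyV⟩
  have hTnt : T.Nontrivial := by
    by_contra hnt
    exact hTunc ((not_nontrivial_iff.1 hnt).countable)
  obtain ⟨y₀, hy₀, y₁, hy₁, hne⟩ := hTnt
  exact ⟨y₀, hy₀.1, y₁, hy₁.1, hne, hcond y₀ hy₀, hcond y₁ hy₁⟩

end Cond

section Scheme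
variable {P C : Type*} [MetricSpace P] [SecondCountableTopology P]
  [MetricSpace C] [SecondCountableTopology C]

/-- A node of the Cantor scheme: a set `V` in the parametrizing space and an open
set `O` in the target such that `G '' V ∩ O` is uncountable. -/
structure SchemeNode (G : P → C) where
  V : Set P
  O : Set C
  opn : IsOpen O
  unc : ¬(G '' V ∩ O).Countable

variable {G : P → C}

lemma SchemeNode.exists_split (s : SchemeNode G) (δ : ℝ≥0∞) (hδ : 0 < δ) :
    ∃ t : SchemeNode G × SchemeNode G,
      t.1.V ⊆ s.V ∧ t.2.V ⊆ s.V ∧ EMetric.diam t.1.V ≤ δ ∧ EMetric.diam t.2.V ≤ δ ∧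
      closure t.1.O ⊆ s.O ∧ closure t.2.O ⊆ s.O ∧ Disjoint (closure t.1.O) (closure t.2.O) := by
  classical
  obtain ⟨y₀, hy₀S, y₁, hy₁S, hne, hc₀, hc₁⟩ := exists_two_condensation_points s.unc
  -- radii in C
  obtain ⟨ε₀, hε₀, hb₀⟩ := Metric.isOpen_iff.1 s.opn y₀ hy₀S.2
  obtain ⟨ε₁, hε₁, hb₁⟩ := Metric.isOpen_iff.1 s.opn y₁ hy₁S.2
  set d : ℝ := dist y₀ y₁ with hd
  have hdpos : 0 < d := dist_pos.2 hne
  set r₀ : ℝ := min (ε₀ / 2) (d / 3)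
  set r₁ : ℝ := min (ε₁ / 2) (d / 3)
  have hr₀ : 0 < r₀ := lt_min (by linarith) (by linarith)
  have hr₁ : 0 < r₁ := lt_min (by linarith) (by linarith)
  have hcl₀ : closure (Metric.ball y₀ r₀) ⊆ s.O :=
    (Metric.closure_ball_subset_closedBall).trans
      ((Metric.closedBall_subset_ball (by simp [r₀]; constructor <;> linarith)).trans hb₀)
  have hcl₁ : closure (Metric.ball y₁ r₁) ⊆ s.O :=
    (Metric.closure_ball_subset_closedBall).trans
      ((Metric.closedBall_subset_ball (by simp [r₁]; constructor <;> linarith)).trans hb₁)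
  have hdisj : Disjoint (closure (Metric.ball y₀ r₀)) (closure (Metric.ball y₁ r₁)) := by
    rw [Set.disjoint_left]
    intro z hz₀ hz₁
    have h₀ : dist z y₀ ≤ r₀ := (Metric.closure_ball_subset_closedBall hz₀)
    have h₁ : dist z y₁ ≤ r₁ := (Metric.closure_ball_subset_closedBall hz₁)
    have := dist_triangle y₀ z y₁
    have hr₀' : r₀ ≤ d / 3 := min_le_right _ _
    have hr₁' : r₁ ≤ d / 3 := min_le_right _ _
    rw [dist_comm y₀ z] at this
    nlinarith
  -- small-diameter cover of s.V in P
  set δ' : ℝ≥0∞ := min δ 1 with hδ'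
  have hδ'pos : 0 < δ' := lt_min hδ one_pos
  have hδ'3 : 0 < δ' / 3 := ENNReal.div_pos hδ'pos.ne' (by norm_num)
  obtain ⟨D, hDc, hDd⟩ := TopologicalSpace.exists_countable_dense P
  have hcover : ∀ v : P, ∃ p ∈ D, v ∈ Metric.eball p (δ' / 3) := by
    intro v
    obtain ⟨p, hpD, hp⟩ := EMetric.mem_closure_iff.1 (hDd.closure_eq ▸ mem_univ v) _ hδ'3
    exact ⟨p, hpD, by rwa [EMetric.mem_ball]⟩
  have hdiam : ∀ p : P, EMetric.diam (s.V ∩ Metric.eball p (δ' / 3)) ≤ δ := by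
    intro p
    refine le_trans (EMetric.diam_mono inter_subset_right) ?_
    refine le_trans EMetric.diam_ball ?_
    calc (2 : ℝ≥0∞) * (δ' / 3) ≤ 3 * (δ' / 3) := by gcongr; norm_num
    _ = δ' := ENNReal.mul_div_cancel' (by norm_num) (by norm_num)
    _ ≤ δ := min_le_left _ _
  -- pick good cover elements for each side
  have key : ∀ (y : C) (r : ℝ), 0 < r → (∀ U ∈ 𝓝 y, ¬(G '' s.V ∩ s.O ∩ U).Countable) →
      ∃ p ∈ D, ¬(G '' (s.V ∩ Metric.eball p (δ' / 3)) ∩ Metric.ball y r).Countable := by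
    intro y r hr hcond
    by_contra hall
    push_neg at hall
    apply hcond (Metric.ball y r) (Metric.ball_mem_nhds y hr)
    have hsub : G '' s.V ∩ s.O ∩ Metric.ball y r ⊆
        ⋃ p ∈ D, (G '' (s.V ∩ Metric.eball p (δ' / 3)) ∩ Metric.ball y r) := by
      rintro x ⟨⟨⟨v, hv, rfl⟩, -⟩, hxb⟩
      obtain ⟨p, hpD, hvp⟩ := hcover v
      exact mem_biUnion hpD ⟨⟨v, ⟨hv, hvp⟩, rfl⟩, hxb⟩
    exact Set.Countable.mono hsub (hDc.biUnion hall)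
  obtain ⟨p₀, -, h₀⟩ := key y₀ r₀ hr₀ hc₀
  obtain ⟨p₁, -, h₁⟩ := key y₁ r₁ hr₁ hc₁
  refine ⟨(⟨s.V ∩ Metric.eball p₀ (δ' / 3), Metric.ball y₀ r₀, Metric.isOpen_ball, h₀⟩,
          ⟨s.V ∩ Metric.eball p₁ (δ' / 3), Metric.ball y₁ r₁, Metric.isOpen_ball, h₁⟩),
    inter_subset_left, inter_subset_left, hdiam p₀, hdiam p₁, hcl₀, hcl₁, hdisj⟩


noncomputable def rootNode (h : ¬(Set.range G).Countable) : SchemeNode G :=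
  ⟨univ, univ, isOpen_univ, by simpa [image_univ] using h⟩

noncomputable def splitPair (s : SchemeNode G) (n : ℕ) : SchemeNode G × SchemeNode G :=
  (s.exists_split ((2⁻¹ : ℝ≥0∞) ^ n) (ENNReal.pow_pos (by norm_num) n)).choose

lemma splitPair_spec (s : SchemeNode G) (n : ℕ) :
    (splitPair s n).1.V ⊆ s.V ∧ (splitPair s n).2.V ⊆ s.V ∧
    EMetric.diam (splitPair s n).1.V ≤ (2⁻¹ : ℝ≥0∞) ^ n ∧
    EMetric.diam (splitPair s n).2.V ≤ (2⁻¹ : ℝ≥0∞) ^ n ∧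
    closure (splitPair s n).1.O ⊆ s.O ∧ closure (splitPair s n).2.O ⊆ s.O ∧
    Disjoint (closure (splitPair s n).1.O) (closure (splitPair s n).2.O) :=
  (s.exists_split ((2⁻¹ : ℝ≥0∞) ^ n) (ENNReal.pow_pos (by norm_num) n)).choose_spec

variable (G) in
noncomputable def node (h : ¬(Set.range G).Countable) : List Bool → SchemeNode G
  | [] => rootNode h
  | b :: u => if b then (splitPair (node h u) u.length).2 else (splitPair (node h u) u.length).1

variable (h : ¬(Set.range G).Countable)

lemma node_cons_V (b : Bool) (u : List Bool) : (node G h (b :: u)).V ⊆ (node G h u).V := by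
  cases b <;> simp only [node, if_true, if_false, Bool.false_eq_true] <;>
    [exact (splitPair_spec _ _).1; exact (splitPair_spec _ _).2.1]

lemma node_cons_diam (b : Bool) (u : List Bool) :
    EMetric.diam (node G h (b :: u)).V ≤ (2⁻¹ : ℝ≥0∞) ^ u.length := by
  cases b <;> simp only [node, if_true, if_false, Bool.false_eq_true] <;>
    [exact (splitPair_spec _ _).2.2.1; exact (splitPair_spec _ _).2.2.2.1]

lemma node_cons_O (b : Bool) (u : List Bool) :
    closure (node G h (b :: u)).O ⊆ (node G h u).O := by
  cases b <;> simp only [node, if_true, if_false, Bool.false_eq_true] <;>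
    [exact (splitPair_spec _ _).2.2.2.2.1; exact (splitPair_spec _ _).2.2.2.2.2.1]

lemma node_cons_disj (u : List Bool) :
    Disjoint (closure (node G h (false :: u)).O) (closure (node G h (true :: u)).O) := by
  simp only [node, if_true, if_false, Bool.false_eq_true]
  exact (splitPair_spec _ _).2.2.2.2.2.2

lemma node_pick (u : List Bool) : ∃ p, p ∈ (node G h u).V ∧ G p ∈ (node G h u).O := by
  have h' := (node G h u).unc
  rcases Set.eq_empty_or_nonempty (G '' (node G h u).V ∩ (node G h u).O) with he | ⟨x, ⟨⟨p, hp, rfl⟩, hO⟩⟩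
  · exact absurd (he ▸ countable_empty) h'
  · exact ⟨p, hp, hO⟩

noncomputable def pt (u : List Bool) : P := (node_pick h u).choose

def chain (z : ℕ → Bool) : ℕ → List Bool
  | 0 => []
  | n + 1 => z n :: chain z n

lemma chain_length (z : ℕ → Bool) (n : ℕ) : (chain z n).length = n := by
  induction n with
  | zero => rfl
  | succ n ih => simp [chain, ih]

lemma chain_congr {z z' : ℕ → Bool} (n : ℕ) (hzz : ∀ i < n, z i = z' i) :
    chain z n = chain z' n := by
  induction n with
  | zero => rfl
  | succ n ih =>
      simp only [chain]
      rw [hzz n (Nat.lt_succ_self n), ih (fun i hi => hzz i (hi.trans (Nat.lt_succ_self n)))]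

lemma chain_V_mono (z : ℕ → Bool) {n m : ℕ} (hnm : n ≤ m) :
    (node G h (chain z m)).V ⊆ (node G h (chain z n)).V := by
  induction m, hnm using Nat.le_induction with
  | base => exact subset_rfl
  | succ m hm ih => exact (node_cons_V h (z m) (chain z m)).trans ih

lemma chain_O_mono (z : ℕ → Bool) {n m : ℕ} (hnm : n ≤ m) :
    (node G h (chain z m)).O ⊆ closure (node G h (chain z n)).O := by
  induction m, hnm using Nat.le_induction with
  | base => exact subset_closure
  | succ m hm ih =>
      exact (subset_closure.trans (node_cons_O h (z m) (chain z m))).trans ih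


theorem exists_cantor_injection_aux [CompleteSpace P] (hG : Continuous G) (h : ¬(Set.range G).Countable) :
    ∃ ψ : (ℕ → Bool) → C, Continuous ψ ∧ Function.Injective ψ ∧ range ψ ⊆ range G := by
  classical
  have hqV : ∀ u, pt h u ∈ (node G h u).V := fun u => (node_pick h u).choose_spec.1
  have hqO : ∀ u, G (pt h u) ∈ (node G h u).O := fun u => (node_pick h u).choose_spec.2
  set seq : (ℕ → Bool) → ℕ → P := fun z n => pt h (chain z n) with hseq
  have hseqV : ∀ z n m, n ≤ m → seq z m ∈ (node G h (chain z n)).V :=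
    fun z n m hm => chain_V_mono h z hm (hqV _)
  have hdiam : ∀ (z : ℕ → Bool) (n : ℕ),
      EMetric.diam (node G h (chain z (n + 1))).V ≤ (2⁻¹ : ℝ≥0∞) ^ n := by
    intro z n
    have := node_cons_diam h (z n) (chain z n)
    rwa [chain_length] at this
  have hpow : ∀ ε : ℝ≥0∞, 0 < ε → ∃ N : ℕ, (2⁻¹ : ℝ≥0∞) ^ N < ε := by
    intro ε hε
    have ht := ENNReal.tendsto_pow_atTop_nhds_zero_of_lt_one (by norm_num : (2⁻¹ : ℝ≥0∞) < 1)
    exact (ht.eventually_lt_const hε).exists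
  have hcauchy : ∀ z, CauchySeq (seq z) := by
    intro z
    rw [EMetric.cauchySeq_iff]
    intro ε hε
    obtain ⟨N, hN⟩ := hpow ε hε
    refine ⟨N + 1, fun m hm n hn => ?_⟩
    exact lt_of_le_of_lt
      ((EMetric.edist_le_diam_of_mem (hseqV z (N+1) m hm) (hseqV z (N+1) n hn)).trans
        (hdiam z N)) hN
  have hlim : ∀ z, ∃ x, Filter.Tendsto (seq z) Filter.atTop (nhds x) :=
    fun z => cauchySeq_tendsto_of_complete (hcauchy z)
  set φ : (ℕ → Bool) → P := fun z => (hlim z).choose with hφdef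
  have hφ : ∀ z, Filter.Tendsto (seq z) Filter.atTop (nhds (φ z)) := fun z => (hlim z).choose_spec
  have hφV : ∀ z n, φ z ∈ closure (node G h (chain z n)).V := by
    intro z n
    apply mem_closure_of_tendsto (hφ z)
    filter_upwards [Filter.eventually_ge_atTop n] with m hm using hseqV z n m hm
  have hGO : ∀ z n, G (φ z) ∈ closure (node G h (chain z n)).O := by
    intro z n
    have ht : Filter.Tendsto (fun m => G (seq z m)) Filter.atTop (nhds (G (φ z))) :=
      (hG.tendsto _).comp (hφ z)
    have := mem_closure_of_tendsto ht (by
      filter_upwards [Filter.eventually_ge_atTop n] with m hm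
      exact chain_O_mono h z hm (hqO _))
    rwa [closure_closure] at this
  have φcont : Continuous φ := by
    rw [continuous_iff_continuousAt]
    intro z
    rw [ContinuousAt, EMetric.tendsto_nhds]
    intro ε hε
    obtain ⟨N, hN⟩ := hpow ε hε
    have hev : ∀ᶠ z' in nhds z, ∀ i ∈ Finset.range (N + 1), z' i = z i := by
      rw [Filter.eventually_all_finset]
      intro i _
      have hopen : IsOpen ((fun w : ℕ → Bool => w i) ⁻¹' {z i}) :=
        (isOpen_discrete ({z i} : Set Bool)).preimage (continuous_apply i)
      exact Filter.eventually_of_mem (hopen.mem_nhds (by simp)) (fun w hw => hw)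
    filter_upwards [hev] with z' hz'
    have hch : chain z' (N + 1) = chain z (N + 1) :=
      chain_congr _ (fun i hi => hz' i (Finset.mem_range.2 hi))
    have h1 := hφV z' (N + 1)
    rw [hch] at h1
    calc edist (φ z') (φ z)
        ≤ EMetric.diam (closure (node G h (chain z (N + 1))).V) :=
          EMetric.edist_le_diam_of_mem h1 (hφV z (N + 1))
      _ = EMetric.diam (node G h (chain z (N + 1))).V := EMetric.diam_closure _
      _ ≤ (2⁻¹ : ℝ≥0∞) ^ N := hdiam z N
      _ < ε := hN
  refine ⟨fun z => G (φ z), hG.comp φcont, ?_, ?_⟩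
  · intro z z' hzz
    by_contra hne
    have hex : ∃ i, z i ≠ z' i := by
      by_contra hh; push_neg at hh; exact hne (funext hh)
    set n := Nat.find hex with hn
    have hdiff : z n ≠ z' n := Nat.find_spec hex
    have hagree : ∀ i < n, z i = z' i := fun i hi => not_not.1 (Nat.find_min hex hi)
    have hch : chain z n = chain z' n := chain_congr n hagree
    have m1 : G (φ z) ∈ closure (node G h (z n :: chain z n)).O := hGO z (n + 1)
    have m2 : G (φ z') ∈ closure (node G h (z' n :: chain z n)).O := by
      have := hGO z' (n + 1)
      rwa [show chain z' (n + 1) = z' n :: chain z n by rw [chain, hch]] at this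
    have hzz' : G (φ z) = G (φ z') := hzz
    rw [hzz'] at m1
    have hdisj := node_cons_disj h (chain z n)
    cases hz : z n <;> cases hz' : z' n
    · exact hdiff (hz.trans hz'.symm)
    · rw [hz] at m1; rw [hz'] at m2
      exact Set.disjoint_left.1 hdisj m1 m2
    · rw [hz] at m1; rw [hz'] at m2
      exact Set.disjoint_left.1 hdisj m2 m1
    · exact hdiff (hz.trans hz'.symm)
  · rintro _ ⟨z, rfl⟩
    exact ⟨φ z, rfl⟩


theorem exists_cantor_injection {P C : Type*} [TopologicalSpace P] [PolishSpace P]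
    [TopologicalSpace C] [PolishSpace C] (G : P → C) (hG : Continuous G)
    (h : ¬(Set.range G).Countable) :
    ∃ ψ : (ℕ → Bool) → C, Continuous ψ ∧ Function.Injective ψ ∧ Set.range ψ ⊆ Set.range G := by
  letI := upgradeIsCompletelyMetrizable P
  letI := upgradeIsCompletelyMetrizable C
  exact exists_cantor_injection_aux hG h

end Scheme



namespace GaleStewart

/-- If `R ⊆ 2^ω × 2^ω` is analytic (empty or a continuous image of
Baire space) and is the graph of a well-ordering of its field, then the field is
countable. -/
theorem countable_field_of_analytic_wellordering
    (R : Set (Cantor × Cantor))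
    (hR : MeasureTheory.AnalyticSet R)
    (hwo : IsWellOrderingGraph R) :
    (fieldOf R).Countable := by
  classical
  haveI : PolishSpace Cantor :=
    @instPolishSpaceOfSeparableSpaceOfIsCompletelyMetrizableSpace _ _ inferInstance inferInstance
  haveI : PolishSpace (Cantor × Cantor) :=
    @instPolishSpaceOfSeparableSpaceOfIsCompletelyMetrizableSpace _ _ inferInstance inferInstance
  obtain ⟨hrefl, hanti, htrans, htotal, hleast⟩ := hwo
  by_contra hX
  -- R is nonempty (else field is empty)
  have hRA := hR
  rw [MeasureTheory.AnalyticSet] at hR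
  rcases hR with hRe | ⟨f, hf, hfr⟩
  · exact hX (by simp [fieldOf, hRe])
  -- the field is the union of two continuous images of Baire space
  have hfield : fieldOf R = range (fun a => (f a).2) ∪ range (fun a => (f a).1) := by
    ext y
    constructor
    · rintro ⟨x, hxy | hyx⟩
      · rw [← hfr] at hxy; obtain ⟨a, ha⟩ := hxy
        exact Or.inl ⟨a, by simp [ha]⟩
      · rw [← hfr] at hyx; obtain ⟨a, ha⟩ := hyx
        exact Or.inr ⟨a, by simp [ha]⟩
    · rintro (⟨a, rfl⟩ | ⟨a, rfl⟩)
      · exact ⟨(f a).1, Or.inl (by rw [← hfr]; exact ⟨a, Prod.ext rfl rfl⟩)⟩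
      · exact ⟨(f a).2, Or.inr (by rw [← hfr]; exact ⟨a, Prod.ext rfl rfl⟩)⟩
  -- one of the two ranges is uncountable
  have hone : ¬(range fun a => (f a).2).Countable ∨ ¬(range fun a => (f a).1).Countable := by
    by_contra hc
    push_neg at hc
    exact hX (by rw [hfield]; exact hc.1.union hc.2)
  -- get a continuous injection ψ of Cantor space into the field
  obtain ⟨ψ, hψc, hψi, hψr⟩ :
      ∃ ψ : (ℕ → Bool) → Cantor, Continuous ψ ∧ Injective ψ ∧ range ψ ⊆ fieldOf R := by
    rcases hone with h2 | h1
    · obtain ⟨ψ, hc, hi, hr⟩ := exists_cantor_injection _ (continuous_snd.comp hf) h2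
      exact ⟨ψ, hc, hi, hr.trans (by rw [hfield]; exact subset_union_left)⟩
    · obtain ⟨ψ, hc, hi, hr⟩ := exists_cantor_injection _ (continuous_fst.comp hf) h1
      exact ⟨ψ, hc, hi, hr.trans (by rw [hfield]; exact subset_union_right)⟩
  have hψX : ∀ z, ψ z ∈ fieldOf R := fun z => hψr ⟨z, rfl⟩
  -- pull back the well-ordering to all of Cantor space
  set W : Set (Cantor × Cantor) := (fun p : Cantor × Cantor => (ψ p.1, ψ p.2)) ⁻¹' R with hW
  have hWcont : Continuous fun p : Cantor × Cantor => (ψ p.1, ψ p.2) :=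
    (hψc.comp continuous_fst).prodMk (hψc.comp continuous_snd)
  have hWa : AnalyticSet W := hRA.preimage hWcont
  have hWcompl : Wᶜ = (Prod.swap ⁻¹' W) ∩ {p : Cantor × Cantor | p.1 ≠ p.2} := by
    ext ⟨a, b⟩
    simp only [mem_compl_iff, mem_preimage, mem_inter_iff, mem_setOf_eq, Prod.swap_prod_mk, hW]
    constructor
    · intro hnot
      have hne : ψ a ≠ ψ b := by
        rintro hab
        exact hnot (by rw [hab]; exact hrefl _ (hψX b))
      rcases htotal _ (hψX a) _ (hψX b) with hab | hba
      · exact absurd hab hnot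
      · exact ⟨hba, fun hab => hne (hab ▸ rfl)⟩
    · rintro ⟨hba, hne⟩ hab
      exact hne (hψi (hanti _ _ hab hba))
  have hWca : AnalyticSet Wᶜ := by
    rw [hWcompl, Set.inter_eq_iInter]
    refine AnalyticSet.iInter fun b => ?_
    cases b
    · have : IsOpen {p : Cantor × Cantor | p.1 ≠ p.2} := isOpen_ne_fun continuous_fst continuous_snd
      exact this.measurableSet.analyticSet
    · exact hWa.preimage continuous_swap
  have hWm : MeasurableSet W := hWa.measurableSet_of_compl hWca
  -- transfer the well-order structure
  have hWtotal : ∀ a b : Cantor, a ≠ b → ((a, b) ∈ W ∧ a ≠ b) ∨ ((b, a) ∈ W ∧ b ≠ a) := by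
    intro a b hne
    rcases htotal _ (hψX a) _ (hψX b) with hab | hba
    · exact Or.inl ⟨hab, hne⟩
    · exact Or.inr ⟨hba, hne.symm⟩
  have hWleast : ∀ B : Set Cantor, B.Nonempty → ∃ m ∈ B, ∀ y ∈ B, (m, y) ∈ W := by
    intro B hB
    obtain ⟨g, ⟨m, hmB, rfl⟩, hg⟩ := hleast (ψ '' B) (image_subset_iff.2 fun z _ => hψX z)
      (hB.image ψ)
    exact ⟨m, hmB, fun y hy => hg (ψ y) ⟨y, hy, rfl⟩⟩
  -- the strict order
  set strict : Set (Cantor × Cantor) := W ∩ {p | p.1 ≠ p.2} with hstrict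
  have hdiagm : MeasurableSet (Set.diagonal Cantor) := isClosed_diagonal.measurableSet
  have hnem : MeasurableSet {p : Cantor × Cantor | p.1 ≠ p.2} := by
    have : {p : Cantor × Cantor | p.1 ≠ p.2} = (Set.diagonal Cantor)ᶜ := by
      ext ⟨a, b⟩; simp [Set.mem_diagonal_iff, eq_comm]
    rw [this]; exact hdiagm.compl
  have hstrictm : MeasurableSet strict := hWm.inter hnem
  -- the measure
  have hℝ : ¬Countable ℝ := not_countable_iff.mpr inferInstance
  set e : ℝ ≃ᵐ (ℕ → Bool) := PolishSpace.measurableEquivNatBoolOfNotCountable hℝ with he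
  set ν : Measure ℝ := volume.restrict (Icc (0:ℝ) 1) with hν
  haveI : IsProbabilityMeasure ν := by
    constructor
    rw [hν, Measure.restrict_apply MeasurableSet.univ, univ_inter, Real.volume_Icc]
    norm_num
  set μ : Measure Cantor := ν.map e with hμ
  haveI : IsProbabilityMeasure μ := Measure.isProbabilityMeasure_map e.measurable.aemeasurable
  have hatom : ∀ x : Cantor, μ {x} = 0 := by
    intro x
    rw [hμ, Measure.map_apply e.measurable (measurableSet_singleton x)]
    have : e ⁻¹' {x} = {e.symm x} := by
      ext y
      simp only [mem_preimage, mem_singleton_iff]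
      exact ⟨fun hh => by rw [← hh, MeasurableEquiv.symm_apply_apply],
        fun hh => by rw [hh, MeasurableEquiv.apply_symm_apply]⟩
    rw [this]
    refine le_antisymm (le_trans (Measure.restrict_le_self _) ?_) zero_le
    rw [Real.volume_singleton]
  -- predecessor sets
  set pred : Cantor → Set Cantor := fun y => {x | (x, y) ∈ strict} with hpred
  have hpredm : ∀ y, MeasurableSet (pred y) := by
    intro y
    exact hstrictm.preimage measurable_prodMk_right
  -- a positive-measure set all of whose elements have null predecessor sets
  obtain ⟨A, hAm, hApos, hAnull⟩ :
      ∃ A : Set Cantor, MeasurableSet A ∧ μ A ≠ 0 ∧ ∀ y ∈ A, μ (pred y) = 0 := by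
    by_cases hB : ∀ y, μ (pred y) = 0
    · refine ⟨univ, MeasurableSet.univ, ?_, fun y _ => hB y⟩
      simp [measure_univ]
    · push_neg at hB
      obtain ⟨m, hmB, hm⟩ := hWleast {y | μ (pred y) ≠ 0} hB
      refine ⟨pred m, hpredm m, hmB, ?_⟩
      intro y hy
      by_contra hy0
      have h1 : (m, y) ∈ W := hm y hy0
      exact hy.2 (hψi (hanti _ _ hy.1 h1))
  have cover : A ×ˢ A ⊆
      (strict ∩ A ×ˢ A) ∪ ((Prod.swap ⁻¹' strict) ∩ A ×ˢ A) ∪ (Set.diagonal Cantor) := by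
    rintro ⟨a, b⟩ ⟨ha, hb⟩
    by_cases hab : a = b
    · exact Or.inr hab
    · rcases hWtotal a b hab with ⟨h1, h2⟩ | ⟨h1, h2⟩
      · exact Or.inl (Or.inl ⟨⟨h1, h2⟩, ha, hb⟩)
      · exact Or.inl (Or.inr ⟨⟨h1, h2⟩, ha, hb⟩)
  have m1 : (μ.prod μ) (strict ∩ A ×ˢ A) = 0 := by
    rw [Measure.prod_apply_symm (hstrictm.inter (hAm.prod hAm))]
    have hz : ∀ y, μ ((fun x => (x, y)) ⁻¹' (strict ∩ A ×ˢ A)) = 0 := by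
      intro y
      by_cases hy : y ∈ A
      · exact measure_mono_null (fun x hx => hx.1) (hAnull y hy)
      · have hemp : (fun x => (x, y)) ⁻¹' (strict ∩ A ×ˢ A) = ∅ := by
          ext x
          simp only [mem_preimage, mem_inter_iff, mem_prod, mem_empty_iff_false, iff_false,
            not_and]
          tauto
        simp [hemp]
      
    simp only [hz]
    simp
  have m2 : (μ.prod μ) ((Prod.swap ⁻¹' strict) ∩ A ×ˢ A) = 0 := by
    rw [Measure.prod_apply ((hstrictm.preimage measurable_swap).inter (hAm.prod hAm))]
    have hz : ∀ x, μ (Prod.mk x ⁻¹' ((Prod.swap ⁻¹' strict) ∩ A ×ˢ A)) = 0 := by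
      intro x
      by_cases hx : x ∈ A
      · refine measure_mono_null (fun y hy => ?_) (hAnull x hx)
        exact hy.1
      · have hemp : Prod.mk x ⁻¹' ((Prod.swap ⁻¹' strict) ∩ A ×ˢ A) = ∅ := by
          ext y
          simp only [mem_preimage, mem_inter_iff, mem_prod, mem_empty_iff_false, iff_false,
            not_and]
          tauto
        simp [hemp]
    simp only [hz]
    simp
  have m3 : (μ.prod μ) (Set.diagonal Cantor) = 0 := by
    rw [Measure.prod_apply hdiagm]
    have hz : ∀ x : Cantor, μ (Prod.mk x ⁻¹' Set.diagonal Cantor) = 0 := by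
      intro x
      have hs : Prod.mk x ⁻¹' Set.diagonal Cantor = {x} := by
        ext y
        simp [Set.mem_diagonal_iff, eq_comm]
      rw [hs]
      exact hatom x
    simp only [hz]
    simp
  have hfin : μ A * μ A = 0 := by
    have hle := measure_mono (μ := μ.prod μ) cover
    rw [Measure.prod_prod] at hle
    have hle2 : (μ.prod μ) ((strict ∩ A ×ˢ A) ∪ ((Prod.swap ⁻¹' strict) ∩ A ×ˢ A) ∪
        Set.diagonal Cantor) ≤ 0 := by
      refine le_trans (measure_union_le _ _) ?_
      rw [m3]
      refine le_trans (add_le_add_left (measure_union_le _ _) 0) ?_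
      rw [m1, m2]
      simp
    exact le_antisymm (le_trans hle hle2) zero_le
  exact hApos (by rcases mul_eq_zero.1 hfin with h0 | h0 <;> exact h0)



end GaleStewart
end

section
/- (Gale–Stewart) Every open subset of Baire space ℕ^ω is determined, and every closed subset of ℕ^ω is determined. -/
namespace GaleStewart

/-! ### Auxiliary development -/

/-- The finite prefix of length `n` of an infinite play. -/
def pre (x : Baire) (n : ℕ) : List ℕ := List.ofFn fun i : Fin n => x i.val

lemma pre_length (x : Baire) (n : ℕ) : (pre x n).length = n := by simp [pre]

lemma pre_zero (x : Baire) : pre x 0 = [] := by simp [pre]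

lemma pre_succ (x : Baire) (n : ℕ) : pre x (n + 1) = pre x n ++ [x n] := by
  rw [pre, List.ofFn_succ', List.concat_eq_append]
  simp [pre]

lemma pre_getD {x : Baire} {n i : ℕ} (h : i < n) : (pre x n).getD i 0 = x i := by
  rw [List.getD_eq_getElem _ _ (by simpa [pre_length] using h)]
  simp [pre]

lemma pre_eq_imp {x y : Baire} {n : ℕ} (h : pre y n = pre x n) {i : ℕ} (hi : i < n) :
    y i = x i := by
  have := congrArg (fun l => l.getD i 0) h
  simpa only [pre_getD hi] using this

/-- The player who moves at positions of length `≡ t (mod 2)` (with `t = 0` for player I,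
`t = 1` for player II) has a strategy forcing the resulting play into `B`, starting from
position `p`. -/
def WinsFrom (B : Set Baire) (t : ℕ) (p : List ℕ) : Prop :=
  ∃ s : Strategy, ∀ x : Baire, pre x p.length = p →
    (∀ k : ℕ, p.length ≤ 2 * k + t → x (2 * k + t) = s (pre x (2 * k + t))) → x ∈ B

lemma wins_of_cyl {B : Set Baire} {t : ℕ} {p : List ℕ}
    (h : ∀ y : Baire, pre y p.length = p → y ∈ B) : WinsFrom B t p :=
  ⟨fun _ => 0, fun x hx _ => h x hx⟩

/-- If the player to move at `p` is the `B`-chaser and they win from `p ++ [n]`,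
then they win from `p` (play `n` first). -/
lemma wins_own {B : Set Baire} {t : ℕ} {p : List ℕ} {n : ℕ}
    (hp : p.length % 2 = t) (hw : WinsFrom B t (p ++ [n])) : WinsFrom B t p := by
  classical
  obtain ⟨s, hs⟩ := hw
  refine ⟨fun r => if r = p then n else s r, ?_⟩
  intro x hx hc
  have hlen : p.length = 2 * (p.length / 2) + t := by omega
  have hxn : x p.length = n := by
    have h1 := hc (p.length / 2) (by omega)
    rw [← hlen] at h1
    rw [h1, hx]
    simp
  apply hs x
  · have : (p ++ [n]).length = p.length + 1 := by simp
    rw [this, pre_succ, hx, hxn]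
  · intro k hk
    have hk' : p.length < 2 * k + t := by
      simp only [List.length_append, List.length_singleton] at hk; omega
    have h2 := hc k (by omega)
    rw [h2]
    simp only []
    exact if_neg (fun hcontra => by
      have := congrArg List.length hcontra
      rw [pre_length] at this; omega)

/-- If the `B`-chaser wins from `p ++ [n]` for every `n`, then they win from `p`
(combine the strategies according to the next move made at `p`). -/
lemma wins_opp {B : Set Baire} {t : ℕ} {p : List ℕ}
    (hw : ∀ n, WinsFrom B t (p ++ [n])) : WinsFrom B t p := by
  classical
  choose f hf using hw
  refine ⟨fun r => if h : p.length < r.length then f (r.getD p.length 0) r else 0, ?_⟩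
  intro x hx hc
  apply hf (x p.length) x
  · have : (p ++ [x p.length]).length = p.length + 1 := by simp
    rw [this, pre_succ, hx]
  · intro k hk
    have hk' : p.length < 2 * k + t := by
      simp only [List.length_append, List.length_singleton] at hk; omega
    have h2 := hc k (by omega)
    rw [h2]
    simp only []
    rw [dif_pos (show p.length < (pre x (2 * k + t)).length by rw [pre_length]; exact hk')]
    rw [pre_getD hk']

/-- Every point of an open set is contained in a basic cylinder inside the set. -/
lemma cyl_s9 {B : Set Baire} (hB : IsOpen B) {x : Baire} (hx : x ∈ B) :
    ∃ n : ℕ, ∀ y : Baire, pre y n = pre x n → y ∈ B := by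
  obtain ⟨I, u, h1, h2⟩ := isOpen_pi_iff.mp hB x hx
  refine ⟨I.sup id + 1, fun y hy => h2 ?_⟩
  rw [Set.mem_pi]
  intro i hi
  have hi' : i < I.sup id + 1 :=
    Nat.lt_succ_of_le (Finset.le_sup (f := id) (Finset.mem_coe.mp hi))
  rw [pre_eq_imp hy hi']
  exact (h1 i (Finset.mem_coe.mp hi)).2

/-- **Key survival lemma.** If `B` is open and the `B`-chaser (moving at parity `t`)
has no winning strategy from the empty position, then the opponent has a strategy
keeping the play out of `B` forever. -/
lemma survive {B : Set Baire} (t : ℕ) (hB : IsOpen B) (h0 : ¬ WinsFrom B t []) :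
    ∃ s : Strategy, ∀ x : Baire, (∀ j : ℕ, j % 2 ≠ t → x j = s (pre x j)) → x ∉ B := by
  classical
  refine ⟨fun r => if h : ∃ m, ¬ WinsFrom B t (r ++ [m]) then h.choose else 0, ?_⟩
  intro x hx hxB
  have inv : ∀ j : ℕ, ¬ WinsFrom B t (pre x j) := by
    intro j
    induction j with
    | zero => rw [pre_zero]; exact h0
    | succ j ih =>
      rw [pre_succ]
      by_cases hj : j % 2 = t
      · exact fun hw => ih (wins_own (by rw [pre_length]; exact hj) hw)
      · have hex : ∃ m, ¬ WinsFrom B t (pre x j ++ [m]) := by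
          by_contra hno
          push_neg at hno
          exact ih (wins_opp hno)
        have hs := hx j hj
        simp only at hs
        rw [hs, dif_pos hex]
        exact hex.choose_spec
  obtain ⟨n, hn⟩ := cyl_s9 hB hxB
  exact inv n (wins_of_cyl (fun y hy => hn y (by rwa [pre_length] at hy)))

/-- **Gale–Stewart.** Every open subset of Baire space is determined,
and every closed subset of Baire space is determined. -/
theorem open_and_closed_determinacy :
    (∀ A : Set Baire, IsOpen A → Determined A) ∧
    (∀ A : Set Baire, IsClosed A → Determined A) := by
  constructor
  · intro A hA
    rcases Classical.em (WinsFrom A 0 []) with ⟨σ, hσ⟩ | h0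
    · exact Or.inl ⟨σ, fun x hx => hσ x (pre_zero x) (fun k _ => hx k)⟩
    · obtain ⟨τ, hτ⟩ := survive 0 hA h0
      refine Or.inr ⟨τ, fun x hx => hτ x (fun j hj => ?_)⟩
      have hj1 : j = 2 * (j / 2) + 1 := by omega
      rw [hj1]
      exact hx (j / 2)
  · intro A hA
    rcases Classical.em (WinsFrom Aᶜ 1 []) with ⟨τ, hτ⟩ | h0
    · exact Or.inr ⟨τ, fun x hx => hτ x (pre_zero x) (fun k _ => hx k)⟩
    · obtain ⟨σ, hσ⟩ := survive 1 hA.isOpen_compl h0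
      refine Or.inl ⟨σ, fun x hx => ?_⟩
      have hj := hσ x (fun j hj => ?_)
      · simpa using hj
      · have hj0 : j = 2 * (j / 2) := by omega
        rw [hj0]
        exact hx (j / 2)

end GaleStewart
end

section
/- (Gale–Stewart) There exists a set A ⊆ ℕ^ω which is not determined. -/
namespace GaleStewart

open Cardinal in
/-- Transfinite diagonalization: if each set in a family indexed by `ι` has cardinality
at least `#ι`, one may choose pairwise distinct representatives. -/
theorem diag_choice {ι β : Type} (P : ι → Set β)
    (hP : ∀ s, #ι ≤ #(P s)) :
    ∃ a : ι → β, (∀ s, a s ∈ P s) ∧ Function.Injective a := by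
  set c := #ι with hc
  obtain ⟨e⟩ : Nonempty (ι ≃ c.ord.ToType) := by
    rw [← Cardinal.eq, Cardinal.mk_ord_toType]
  set T := c.ord.ToType
  have key : ∀ (i : T) (g : ∀ j : T, j < i → β),
      (P (e.symm i) \ {x | ∃ j hj, g j hj = x}).Nonempty := by
    intro i g
    rw [Set.nonempty_iff_ne_empty]
    intro hemp
    have hsub : P (e.symm i) ⊆ {x | ∃ j hj, g j hj = x} := by
      intro x hx
      by_contra hno
      exact Set.eq_empty_iff_forall_notMem.1 hemp x ⟨hx, hno⟩
    have h1 : #(P (e.symm i)) ≤ #{x | ∃ j hj, g j hj = x} :=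
      Cardinal.mk_le_mk_of_subset hsub
    have h2 : #{x | ∃ j hj, g j hj = x} ≤ #(Set.Iio i) := by
      have : {x | ∃ j hj, g j hj = x} ⊆ Set.range (fun p : Set.Iio i => g p p.2) := by
        rintro x ⟨j, hj, rfl⟩; exact ⟨⟨j, hj⟩, rfl⟩
      exact (Cardinal.mk_le_mk_of_subset this).trans Cardinal.mk_range_le
    have h3 : #(Set.Iio i) < c := Cardinal.mk_Iio_ord_toType i
    exact absurd ((hP _).trans (h1.trans h2)) (not_le.2 h3)
  have wf : WellFoundedLT T := inferInstance
  let f : T → β := wf.wf.fix (fun i rec => (key i rec).some)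
  have hfix : ∀ i : T, f i = (key i (fun j _ => f j)).some := fun i =>
    wf.wf.fix_eq _ i
  have hmem : ∀ i, f i ∈ P (e.symm i) ∧ ∀ j, j < i → f i ≠ f j := by
    intro i
    have := (key i (fun j _ => f j)).some_mem
    rw [← hfix i] at this
    exact ⟨this.1, fun j hj hne => this.2 ⟨j, hj, hne.symm⟩⟩
  refine ⟨fun s => f (e s), fun s => by simpa using (hmem (e s)).1, ?_⟩
  intro s t hst
  by_contra hne
  have het : e s ≠ e t := fun h => hne (e.injective h)
  rcases het.lt_or_gt with h | h
  · exact (hmem (e t)).2 _ h hst.symm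
  · exact (hmem (e s)).2 _ h hst

/-- The first `n` moves when I follows `σ` and II follows `τ`. -/
def moves (σ τ : Strategy) : ℕ → List ℕ
  | 0 => []
  | n + 1 =>
    moves σ τ n ++ [if n % 2 = 0 then σ (moves σ τ n) else τ (moves σ τ n)]

/-- The full play when I follows `σ` and II follows `τ`. -/
def play (σ τ : Strategy) (n : ℕ) : ℕ :=
  if n % 2 = 0 then σ (moves σ τ n) else τ (moves σ τ n)

lemma moves_succ (σ τ : Strategy) (n : ℕ) :
    moves σ τ (n + 1) = moves σ τ n ++ [play σ τ n] := rfl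

lemma ofFn_play (σ τ : Strategy) (n : ℕ) :
    (List.ofFn fun i : Fin n => play σ τ i.val) = moves σ τ n := by
  induction n with
  | zero => rfl
  | succ n ih =>
    rw [List.ofFn_succ', moves_succ, ← ih]
    simp [List.concat_eq_append]

lemma playIsI_play (σ τ : Strategy) : PlayIsI σ (play σ τ) := by
  intro k
  rw [ofFn_play]
  simp [play, Nat.mul_mod_right]

lemma playIsII_play (σ τ : Strategy) : PlayIsII τ (play σ τ) := by
  intro k
  rw [ofFn_play]
  have : (2 * k + 1) % 2 = 1 := by omega
  simp [play, this]

/-- Encode a sequence `y` as a strategy playing `y k` at that player's `k`-th move. -/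
def ofSeq (y : Baire) : Strategy := fun l => y (l.length / 2)

lemma length_moves (σ τ : Strategy) (n : ℕ) : (moves σ τ n).length = n := by
  induction n with
  | zero => rfl
  | succ n ih => simp [moves_succ, ih]

/-- The play where I follows `σ` and II plays the sequence `y`. -/
def gI (σ : Strategy) (y : Baire) : Baire := play σ (ofSeq y)

/-- The play where II follows `τ` and I plays the sequence `y`. -/
def gII (τ : Strategy) (y : Baire) : Baire := play (ofSeq y) τ

lemma gI_odd (σ : Strategy) (y : Baire) (k : ℕ) : gI σ y (2 * k + 1) = y k := by
  have h : (2 * k + 1) % 2 = 1 := by omega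
  have h2 : (2 * k + 1) / 2 = k := by omega
  simp [gI, play, h, ofSeq, length_moves, h2]

lemma gII_even (τ : Strategy) (y : Baire) (k : ℕ) : gII τ y (2 * k) = y k := by
  have h : (2 * k) % 2 = 0 := by omega
  have h2 : (2 * k) / 2 = k := by omega
  simp [gII, play, h, ofSeq, length_moves, h2]

lemma gI_injective (σ : Strategy) : Function.Injective (gI σ) := by
  intro y y' h
  funext k
  have := congrFun h (2 * k + 1)
  rwa [gI_odd, gI_odd] at this

lemma gII_injective (τ : Strategy) : Function.Injective (gII τ) := by
  intro y y' h
  funext k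
  have := congrFun h (2 * k)
  rwa [gII_even, gII_even] at this

open Cardinal in
/-- **Gale–Stewart.** There is a set `A ⊆ ℕ^ω` which is not
determined. -/
theorem exists_undetermined_set :
    ∃ A : Set Baire, ¬ Determined A := by
  -- the index type: strategies for I (left) and for II (right)
  set ι := Sum Strategy Strategy with hι
  -- the payoff sets to be diagonalized against
  set P : ι → Set Baire := fun s =>
    Sum.elim (fun σ => {x | PlayIsI σ x}) (fun τ => {x | PlayIsII τ x}) s with hPdef
  have hcardStrat : #Strategy = #Baire :=
    Cardinal.mk_congr ((Denumerable.eqv (List ℕ)).arrowCongr (Equiv.refl ℕ))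
  have hcard : #ι = #Baire := by
    rw [hι, Cardinal.mk_sum, hcardStrat]; simp only [Cardinal.lift_id]
    exact Cardinal.add_eq_self (Cardinal.aleph0_le_mk Baire)
  have hP : ∀ s, #ι ≤ #(P s) := by
    rintro (σ | τ)
    · rw [hcard]
      exact Cardinal.mk_le_of_injective (f := fun y => (⟨gI σ y, playIsI_play σ _⟩ :
        P (Sum.inl σ))) fun y y' h => gI_injective σ (congrArg Subtype.val h)
    · rw [hcard]
      exact Cardinal.mk_le_of_injective (f := fun y => (⟨gII τ y, playIsII_play _ τ⟩ :
        P (Sum.inr τ))) fun y y' h => gII_injective τ (congrArg Subtype.val h)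
  obtain ⟨a, ha, hainj⟩ := diag_choice P hP
  refine ⟨Set.range fun τ : Strategy => a (Sum.inr τ), ?_⟩
  rintro (⟨σ, hσ⟩ | ⟨τ, hτ⟩)
  · -- σ is not winning for I: the play `a (inl σ)` follows σ but is not in A
    have h1 : PlayIsI σ (a (Sum.inl σ)) := ha (Sum.inl σ)
    obtain ⟨τ, hτ⟩ := hσ _ h1
    exact Sum.inr_ne_inl (hainj hτ)
  · -- τ is not winning for II: the play `a (inr τ)` follows τ but is in A
    have h1 : PlayIsII τ (a (Sum.inr τ)) := ha (Sum.inr τ)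
    exact hτ _ h1 ⟨τ, rfl⟩

end GaleStewart
end
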